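/- arXiv:1206.0553 — 9 statements merged into one kernel-verified Lean document; each statement's English description precedes it below -/
import Mathlib

section
/- The shift map σ on ℤ₂ satisfies Q_{m,r} ∘ T_{m,r} = σ ∘ Q_{m,r}, where σ(x) = x/2 if x is even and σ(x) = (x-1)/2 if x is odd. -/
open scoped Classical

lemma padic_zero_of_forall_pow_dvd (a : ℤ_[2]) (h : ∀ k : ℕ, (2 ^ k : ℤ_[2]) ∣ a) :
    a = 0 := by
  have hn : ∀ n : ℕ, ‖a‖ ≤ (2 : ℝ) ^ (-(n : ℤ)) := by
    intro n
    have := (PadicInt.norm_le_pow_iff_mem_span_pow a n).2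
      (Ideal.mem_span_singleton.2 (by exact_mod_cast h n))
    exact_mod_cast this
  by_contra ha
  have hpos : 0 < ‖a‖ := norm_pos_iff.2 ha
  obtain ⟨n, hn'⟩ := exists_pow_lt_of_lt_one hpos (by norm_num : (1 / 2 : ℝ) < 1)
  have heq : ((1 : ℝ) / 2) ^ n = (2 : ℝ) ^ (-(n : ℤ)) := by
    rw [zpow_neg, zpow_natCast, one_div, inv_pow]
  rw [heq] at hn'
  linarith [hn n]

/-- `Q_{m,r} ∘ T_{m,r} = σ ∘ Q_{m,r}` where `σ` is the 2-adic shift map. -/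
theorem stmt1 (m r : ℤ) (hm : Odd m) (hr : Odd r)
    (T Q σ : ℤ_[2] → ℤ_[2])
    (hT : ∀ x, 2 * T x = if (2 : ℤ_[2]) ∣ x then x else (m : ℤ_[2]) * x + (r : ℤ_[2]))
    (hQ : ∀ x (k : ℕ), (2 ^ k : ℤ_[2]) ∣
      (Q x - ∑ i ∈ Finset.range k, (if (2 : ℤ_[2]) ∣ T^[i] x then 0 else 1) * 2 ^ i))
    (hσ : ∀ x, 2 * σ x = if (2 : ℤ_[2]) ∣ x then x else x - 1) :
    Q ∘ T = σ ∘ Q := by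
  funext x
  simp only [Function.comp_apply]
  set d : ℕ → ℤ_[2] := fun i => if (2 : ℤ_[2]) ∣ T^[i] x then 0 else 1 with hd
  -- first digit of Q x matches parity of x
  have h2 : (2 : ℤ_[2]) ≠ 0 := by norm_num
  have hQx1 := hQ x 1
  simp only [Finset.range_one, Finset.sum_singleton, pow_zero, mul_one, pow_one,
    Function.iterate_zero, id_eq] at hQx1
  have hpar : ((2 : ℤ_[2]) ∣ Q x) ↔ ((2 : ℤ_[2]) ∣ x) := by
    constructor
    · intro h
      by_contra hx
      simp only [hx, ↓reduceIte] at hQx1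
      have hdvd1 : (2 : ℤ_[2]) ∣ 1 := by
        have := dvd_sub h hQx1; simpa using this
      have h1 : ‖(1 : ℤ_[2])‖ < 1 := (PadicInt.norm_lt_one_iff_dvd 1).2 hdvd1
      simp at h1
    · intro h
      simp only [h, ↓reduceIte, sub_zero] at hQx1
      exact hQx1
  -- 2 * σ (Q x) = Q x - d 0
  have hd0 : d 0 = if (2 : ℤ_[2]) ∣ x then 0 else 1 := by
    simp only [hd, Function.iterate_zero, id_eq]
    rfl
  have hσQ : 2 * σ (Q x) = Q x - d 0 := by
    by_cases hx : (2 : ℤ_[2]) ∣ x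
    · rw [hσ, if_pos (hpar.2 hx), hd0, if_pos hx, sub_zero]
    · rw [hσ, if_neg (fun h => hx (hpar.1 h)), hd0, if_neg hx]
  -- difference divisible by all powers of 2
  have key : ∀ k : ℕ, (2 ^ k : ℤ_[2]) ∣ (Q (T x) - σ (Q x)) := by
    intro k
    have h1 := hQ (T x) k
    have h2' := hQ x (k + 1)
    -- rewrite digits of T x as shifted digits of x
    have hdig : ∀ i, (if (2 : ℤ_[2]) ∣ T^[i] (T x) then (0:ℤ_[2]) else 1) = d (i + 1) := by
      intro i
      simp only [hd]
      rw [← Function.iterate_succ_apply]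
    have h1' : (2 ^ k : ℤ_[2]) ∣ (Q (T x) - ∑ i ∈ Finset.range k, d (i + 1) * 2 ^ i) := by
      simpa only [hdig] using h1
    have hsum : (∑ i ∈ Finset.range (k + 1), d i * 2 ^ i)
        = 2 * (∑ i ∈ Finset.range k, d (i + 1) * 2 ^ i) + d 0 := by
      rw [Finset.sum_range_succ' (fun i => d i * 2 ^ i), Finset.mul_sum]
      congr 1
      · exact Finset.sum_congr rfl fun i _ => by ring
      · ring
    -- 2^(k+1) ∣ 2 * (Q(Tx) - σ(Qx))
    have hbig : (2 ^ (k + 1) : ℤ_[2]) ∣ 2 * (Q (T x) - σ (Q x)) := by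
      have e : 2 * (Q (T x) - σ (Q x))
          = 2 * (Q (T x) - ∑ i ∈ Finset.range k, d (i + 1) * 2 ^ i)
            - (Q x - ∑ i ∈ Finset.range (k + 1), d i * 2 ^ i) := by
        rw [mul_sub, hσQ, hsum]; ring
      rw [e]
      exact dvd_sub (by rw [pow_succ, mul_comm]; exact mul_dvd_mul_left 2 h1') h2'
    rw [pow_succ, mul_comm ((2:ℤ_[2])^k) 2] at hbig
    exact (mul_dvd_mul_iff_left h2).mp hbig
  exact sub_eq_zero.mp (padic_zero_of_forall_pow_dvd _ key)
end

section
/- The map Q_{m,r} : ℤ₂ → ℤ₂ preserves the 2-adic norm: |Q_{m,r}(x)|₂ = |x|₂ for all x ∈ ℤ₂. -/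
open scoped Classical

/-- `Q_{m,r}` preserves the 2-adic norm. -/
theorem stmt3 (m r : ℤ) (hm : Odd m) (hr : Odd r)
    (T Q : ℤ_[2] → ℤ_[2])
    (hT : ∀ x, 2 * T x = if (2 : ℤ_[2]) ∣ x then x else (m : ℤ_[2]) * x + (r : ℤ_[2]))
    (hQ : ∀ x (k : ℕ), (2 ^ k : ℤ_[2]) ∣
      (Q x - ∑ i ∈ Finset.range k, (if (2 : ℤ_[2]) ∣ T^[i] x then 0 else 1) * 2 ^ i)) :
    ∀ x, ‖Q x‖ = ‖x‖ := by
  have h2 : (2 : ℤ_[2]) ≠ 0 := by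
    exact_mod_cast (Nat.cast_ne_zero (R := ℤ_[2])).2 two_ne_zero
  have hTdvd : ∀ y : ℤ_[2], (2 : ℤ_[2]) ∣ y → 2 * T y = y := by
    intro y hy
    rw [hT y, if_pos hy]
  -- key lemma: if 2^k ∣ y then 2^k * T^[k] y = y
  have hA : ∀ (k : ℕ) (y : ℤ_[2]), (2 ^ k : ℤ_[2]) ∣ y → 2 ^ k * T^[k] y = y := by
    intro k
    induction k with
    | zero => intro y _; simp
    | succ k ih =>
      intro y hy
      obtain ⟨c, hc⟩ := hy
      have hy2 : (2 : ℤ_[2]) ∣ y := ⟨2 ^ k * c, by rw [hc]; ring⟩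
      have hTy : 2 * T y = y := hTdvd y hy2
      have hTyc : T y = 2 ^ k * c := by
        apply mul_left_cancel₀ h2
        rw [hTy, hc]; ring
      have key : 2 ^ k * T^[k] (T y) = T y := ih (T y) ⟨c, hTyc⟩
      rw [Function.iterate_succ_apply]
      calc 2 ^ (k + 1) * T^[k] (T y) = 2 * (2 ^ k * T^[k] (T y)) := by ring
        _ = 2 * T y := by rw [key]
        _ = y := hTy
  intro x
  by_cases hx : x = 0
  · subst hx
    have hT0 : T 0 = 0 := by
      apply mul_left_cancel₀ h2
      rw [hTdvd 0 (dvd_zero _), mul_zero]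
    have hiter : ∀ i, T^[i] (0 : ℤ_[2]) = 0 := by
      intro i
      induction i with
      | zero => rfl
      | succ i ih => rw [Function.iterate_succ_apply', ih, hT0]
    have hsum : ∀ k, ∑ i ∈ Finset.range k,
        (if (2 : ℤ_[2]) ∣ T^[i] (0:ℤ_[2]) then 0 else 1) * (2:ℤ_[2]) ^ i = 0 := by
      intro k
      apply Finset.sum_eq_zero
      intro i _
      rw [hiter i, if_pos (dvd_zero (2:ℤ_[2])), zero_mul]
    have hdvd : ∀ k : ℕ, (2 ^ k : ℤ_[2]) ∣ Q 0 := by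
      intro k
      have h := hQ 0 k
      rwa [hsum k, sub_zero] at h
    have hQ0 : Q 0 = 0 := by
      by_contra h
      have hpos : 0 < ‖Q 0‖ := norm_pos_iff.2 h
      obtain ⟨k, hk⟩ := exists_pow_lt_of_lt_one hpos (by norm_num : (1/2 : ℝ) < 1)
      have hle : ‖Q 0‖ ≤ ((2:ℕ) : ℝ) ^ (-(k : ℤ)) := by
        rw [PadicInt.norm_le_pow_iff_mem_span_pow]
        exact Ideal.mem_span_singleton.2 (by exact_mod_cast hdvd k)
      have heq : ((1:ℝ)/2) ^ k = ((2:ℕ):ℝ) ^ (-(k:ℤ)) := by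
        rw [zpow_neg, zpow_natCast, one_div, inv_pow]; norm_num
      rw [heq] at hk
      exact absurd (hle.trans_lt hk) (lt_irrefl _)
    rw [hQ0]
  · -- x ≠ 0
    set n := x.valuation with hn
    set u := PadicInt.unitCoeff hx with hu
    have hspec : x = (u : ℤ_[2]) * 2 ^ n := by
      have := PadicInt.unitCoeff_spec hx
      exact_mod_cast this
    have hunorm : ‖(u : ℤ_[2])‖ = 1 := PadicInt.norm_units u
    have hund : ¬ (2 : ℤ_[2]) ∣ (u : ℤ_[2]) := by
      intro hd
      have hlt : ‖(u : ℤ_[2])‖ < 1 :=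
        (PadicInt.norm_lt_one_iff_dvd _).2 (by exact_mod_cast hd)
      rw [hunorm] at hlt
      exact lt_irrefl _ hlt
    -- T^[i] x = 2^(n-i) * u for i ≤ n
    have hiter : ∀ i, i ≤ n → T^[i] x = 2 ^ (n - i) * (u : ℤ_[2]) := by
      intro i hi
      have hpow : (2 : ℤ_[2]) ^ n = 2 ^ i * 2 ^ (n - i) := by
        rw [← pow_add]; congr 1; omega
      have hdvd : (2 ^ i : ℤ_[2]) ∣ x :=
        ⟨2 ^ (n - i) * u, by rw [hspec, hpow]; ring⟩
      have := hA i x hdvd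
      apply mul_left_cancel₀ (pow_ne_zero i h2)
      rw [this, hspec, hpow]; ring
    have hsum : ∑ i ∈ Finset.range (n + 1),
        (if (2 : ℤ_[2]) ∣ T^[i] x then 0 else 1) * (2:ℤ_[2]) ^ i = 2 ^ n := by
      rw [Finset.sum_range_succ]
      have h1 : ∑ i ∈ Finset.range n,
          (if (2 : ℤ_[2]) ∣ T^[i] x then 0 else 1) * (2:ℤ_[2]) ^ i = 0 := by
        apply Finset.sum_eq_zero
        intro i hi
        have hi' := Finset.mem_range.1 hi
        have hd : (2 : ℤ_[2]) ∣ T^[i] x := by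
          rw [hiter i hi'.le]
          exact ⟨2 ^ (n - i - 1) * u, by
            rw [← mul_assoc, ← pow_succ']
            congr 2
            omega⟩
        rw [if_pos hd, zero_mul]
      have h2' : ¬ (2 : ℤ_[2]) ∣ T^[n] x := by
        rw [hiter n le_rfl, Nat.sub_self, pow_zero, one_mul]
        exact hund
      rw [h1, if_neg h2', zero_add, one_mul]
    obtain ⟨c, hc⟩ := hQ x (n + 1)
    rw [hsum, sub_eq_iff_eq_add] at hc
    have hQx : Q x = 2 ^ n * (2 * c + 1) := by rw [hc]; ring
    have hodd : ¬ (2 : ℤ_[2]) ∣ (2 * c + 1) := by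
      rintro ⟨d, hd⟩
      have hone : (2 : ℤ_[2]) ∣ 1 := ⟨d - c, by rw [mul_sub, ← hd]; ring⟩
      have h1 : ‖(1 : ℤ_[2])‖ < 1 :=
        (PadicInt.norm_lt_one_iff_dvd 1).2 (by exact_mod_cast hone)
      simp at h1
    have hoddnorm : ‖(2 * c + 1 : ℤ_[2])‖ = 1 := by
      by_contra h
      have hlt : ‖(2 * c + 1 : ℤ_[2])‖ < 1 := lt_of_le_of_ne (PadicInt.norm_le_one _) h
      exact hodd (by exact_mod_cast (PadicInt.norm_lt_one_iff_dvd _).1 hlt)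
    rw [hQx, hspec, norm_mul, norm_mul, hoddnorm, hunorm, mul_one, one_mul]
end

section
/- The map Q_{m,r} : ℤ₂ → ℤ₂ is continuous (in the 2-adic topology); indeed x ≡ y (mod 2^k) implies Q_{m,r}(x) ≡ Q_{m,r}(y) (mod 2^k). -/
open scoped Classical

/-- `Q_{m,r}` is continuous; indeed `x ≡ y (mod 2^k)` implies
`Q_{m,r}(x) ≡ Q_{m,r}(y) (mod 2^k)`. -/
theorem stmt4 (m r : ℤ) (hm : Odd m) (hr : Odd r)
    (T Q : ℤ_[2] → ℤ_[2])
    (hT : ∀ x, 2 * T x = if (2 : ℤ_[2]) ∣ x then x else (m : ℤ_[2]) * x + (r : ℤ_[2]))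
    (hQ : ∀ x (k : ℕ), (2 ^ k : ℤ_[2]) ∣
      (Q x - ∑ i ∈ Finset.range k, (if (2 : ℤ_[2]) ∣ T^[i] x then 0 else 1) * 2 ^ i)) :
    Continuous Q ∧
      ∀ (k : ℕ) (x y : ℤ_[2]), (2 ^ k : ℤ_[2]) ∣ (x - y) → (2 ^ k : ℤ_[2]) ∣ (Q x - Q y) := by
  have h2 : (2 : ℤ_[2]) ≠ 0 := two_ne_zero
  -- parity agreement
  have par : ∀ x y : ℤ_[2], (2 : ℤ_[2]) ∣ x - y → ((2 : ℤ_[2]) ∣ x ↔ (2 : ℤ_[2]) ∣ y) := by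
    intro x y h
    constructor
    · intro hx
      have := dvd_sub hx h
      simpa using this
    · intro hy
      have := dvd_add h hy
      simpa using this
  -- one step of T
  have step : ∀ (k : ℕ) (x y : ℤ_[2]),
      (2 ^ (k + 1) : ℤ_[2]) ∣ x - y → (2 ^ k : ℤ_[2]) ∣ T x - T y := by
    intro k x y h
    have hpar : (2 : ℤ_[2]) ∣ x - y := dvd_trans (dvd_pow_self 2 (Nat.succ_ne_zero k)) h
    have key : (2 ^ (k + 1) : ℤ_[2]) ∣ 2 * (T x - T y) := by
      rw [mul_sub, hT x, hT y]
      by_cases hx : (2 : ℤ_[2]) ∣ x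
      · have hy : (2 : ℤ_[2]) ∣ y := (par x y hpar).mp hx
        rw [if_pos hx, if_pos hy]
        exact h
      · have hy : ¬ (2 : ℤ_[2]) ∣ y := fun hy => hx ((par x y hpar).mpr hy)
        rw [if_neg hx, if_neg hy]
        have : (m : ℤ_[2]) * x + (r : ℤ_[2]) - ((m : ℤ_[2]) * y + (r : ℤ_[2]))
            = (m : ℤ_[2]) * (x - y) := by ring
        rw [this]
        exact Dvd.dvd.mul_left h _
    rw [pow_succ, mul_comm ((2:ℤ_[2])^k) 2] at key
    exact (mul_dvd_mul_iff_left h2).mp key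
  -- iterated
  have iter : ∀ (i k : ℕ) (x y : ℤ_[2]),
      (2 ^ (i + k) : ℤ_[2]) ∣ x - y → (2 ^ k : ℤ_[2]) ∣ T^[i] x - T^[i] y := by
    intro i
    induction i with
    | zero => intro k x y h; simpa using h
    | succ n ih =>
      intro k x y h
      have h' : (2 ^ (n + (k + 1)) : ℤ_[2]) ∣ x - y := by
        have : n + (k + 1) = n + 1 + k := by ring
        rwa [this]
      have := ih (k + 1) x y h'
      have := step k (T^[n] x) (T^[n] y) this
      simpa [Function.iterate_succ_apply'] using this
  -- the main congruence
  have main : ∀ (k : ℕ) (x y : ℤ_[2]),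
      (2 ^ k : ℤ_[2]) ∣ (x - y) → (2 ^ k : ℤ_[2]) ∣ (Q x - Q y) := by
    intro k x y h
    -- for i < k, parities of T^[i] x and T^[i] y agree, so the partial sums are equal
    have sums : (∑ i ∈ Finset.range k, (if (2 : ℤ_[2]) ∣ T^[i] x then 0 else 1) * 2 ^ i : ℤ_[2])
        = ∑ i ∈ Finset.range k, (if (2 : ℤ_[2]) ∣ T^[i] y then 0 else 1) * 2 ^ i := by
      apply Finset.sum_congr rfl
      intro i hi
      have hik : i < k := Finset.mem_range.mp hi
      have hd : (2 ^ (i + (k - i)) : ℤ_[2]) ∣ x - y := by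
        rwa [Nat.add_sub_cancel' hik.le]
      have hdiff := iter i (k - i) x y hd
      have h1 : (2 : ℤ_[2]) ∣ T^[i] x - T^[i] y := by
        refine dvd_trans (dvd_pow_self 2 ?_) hdiff
        omega
      rw [par _ _ h1]
    calc (2 ^ k : ℤ_[2]) ∣ (Q x - ∑ i ∈ Finset.range k,
            (if (2 : ℤ_[2]) ∣ T^[i] x then 0 else 1) * 2 ^ i)
          - (Q y - ∑ i ∈ Finset.range k,
            (if (2 : ℤ_[2]) ∣ T^[i] y then 0 else 1) * 2 ^ i) :=
        dvd_sub (hQ x k) (hQ y k)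
      _ = Q x - Q y := by rw [sums]; ring
  refine ⟨?_, main⟩
  -- continuity
  rw [Metric.continuous_iff]
  intro x ε hε
  obtain ⟨n, hn⟩ : ∃ n : ℕ, ((2 : ℝ) ^ n)⁻¹ < ε := by
    obtain ⟨n, hn⟩ := pow_unbounded_of_one_lt ε⁻¹ (by norm_num : (1:ℝ) < 2)
    exact ⟨n, inv_lt_of_inv_lt₀ hε hn⟩
  refine ⟨((2 : ℝ) ^ n)⁻¹, by positivity, ?_⟩
  intro y hy
  have hle : ‖y - x‖ ≤ (2 : ℝ) ^ (-(n : ℤ)) := by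
    rw [zpow_neg, zpow_natCast]
    exact le_of_lt (by simpa [dist_eq_norm] using hy)
  have hdvd : (2 ^ n : ℤ_[2]) ∣ y - x := by
    have := (PadicInt.norm_le_pow_iff_mem_span_pow (y - x) n).mp hle
    rwa [Ideal.mem_span_singleton] at this
  have hQd := main n y x hdvd
  have : ‖Q y - Q x‖ ≤ (2 : ℝ) ^ (-(n : ℤ)) := by
    have h' := (PadicInt.norm_le_pow_iff_mem_span_pow (Q y - Q x) n).mpr
      (Ideal.mem_span_singleton.mpr hQd)
    exact_mod_cast h'
  rw [dist_eq_norm]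
  calc ‖Q y - Q x‖ ≤ (2 : ℝ) ^ (-(n : ℤ)) := this
    _ = ((2 : ℝ) ^ n)⁻¹ := by rw [zpow_neg, zpow_natCast]
    _ < ε := hn
end

section
/- The inverse Φ_{m,r} of Q_{m,r} satisfies Φ_{m,r}(2x) = 2·Φ_{m,r}(x) for all x ∈ ℤ₂. -/
open scoped Classical

lemma aux_zero (z : ℤ_[2]) (h : ∀ k : ℕ, (2 ^ k : ℤ_[2]) ∣ z) : z = 0 := by
  by_contra h0
  have hz : 0 < ‖z‖ := norm_pos_iff.mpr h0
  obtain ⟨k, hk⟩ := exists_pow_lt_of_lt_one hz (by norm_num : (1/2 : ℝ) < 1)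
  have hle : ‖z‖ ≤ (2 : ℝ) ^ (-(k : ℤ)) := by
    have := (PadicInt.norm_le_pow_iff_mem_span_pow z k).mpr
      (by rw [Ideal.mem_span_singleton]
          simpa using h k)
    simpa using this
  have : (2 : ℝ) ^ (-(k : ℤ)) = (1/2 : ℝ) ^ k := by
    rw [zpow_neg, one_div, inv_pow, zpow_natCast]
  linarith [hle, hk, this ▸ hle]

/-- the inverse `Φ_{m,r}` of `Q_{m,r}` satisfies `Φ(2x) = 2·Φ(x)`. -/
theorem stmt5 (m r : ℤ) (hm : Odd m) (hr : Odd r)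
    (T Q Φ : ℤ_[2] → ℤ_[2])
    (hT : ∀ x, 2 * T x = if (2 : ℤ_[2]) ∣ x then x else (m : ℤ_[2]) * x + (r : ℤ_[2]))
    (hQ : ∀ x (k : ℕ), (2 ^ k : ℤ_[2]) ∣
      (Q x - ∑ i ∈ Finset.range k, (if (2 : ℤ_[2]) ∣ T^[i] x then 0 else 1) * 2 ^ i))
    (hΦl : Function.LeftInverse Φ Q) (hΦr : Function.RightInverse Φ Q) :
    ∀ x, Φ (2 * x) = 2 * Φ x := by
  have h2 : (2 : ℤ_[2]) ≠ 0 := two_ne_zero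
  -- T (2y) = y
  have hT2 : ∀ y, T (2 * y) = y := by
    intro y
    have := hT (2 * y)
    rw [if_pos ⟨y, rfl⟩] at this
    exact mul_left_cancel₀ h2 this
  have hiter : ∀ (i : ℕ) (y : ℤ_[2]), T^[i+1] (2 * y) = T^[i] y := by
    intro i y
    rw [Function.iterate_succ_apply, hT2]
  -- Q (2y) = 2 * Q y
  have hQ2 : ∀ y, Q (2 * y) = 2 * Q y := by
    intro y
    have key : ∀ k : ℕ, (2 ^ k : ℤ_[2]) ∣ (Q (2 * y) - 2 * Q y) := by
      intro k
      have d1 := hQ (2 * y) (k + 1)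
      have d2 := hQ y k
      have hsum : (∑ i ∈ Finset.range (k+1),
          (if (2 : ℤ_[2]) ∣ T^[i] (2*y) then (0:ℤ_[2]) else 1) * 2 ^ i)
          = 2 * ∑ i ∈ Finset.range k, (if (2 : ℤ_[2]) ∣ T^[i] y then (0:ℤ_[2]) else 1) * 2 ^ i := by
        have hdvd : (2 : ℤ_[2]) ∣ 2 * y := Dvd.intro y rfl
        rw [Finset.sum_range_succ']
        simp only [hiter, pow_zero]
        rw [Function.iterate_zero_apply, if_pos hdvd, zero_mul, add_zero, Finset.mul_sum]
        apply Finset.sum_congr rfl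
        intro i _
        ring
      have e1 : (2 ^ (k+1) : ℤ_[2]) ∣ (Q (2*y) -
          2 * ∑ i ∈ Finset.range k, (if (2 : ℤ_[2]) ∣ T^[i] y then (0:ℤ_[2]) else 1) * 2 ^ i) := by
        rw [hsum] at d1; exact d1
      have e2 : (2 ^ (k+1) : ℤ_[2]) ∣ (2 * (Q y -
          ∑ i ∈ Finset.range k, (if (2 : ℤ_[2]) ∣ T^[i] y then (0:ℤ_[2]) else 1) * 2 ^ i)) := by
        rw [pow_succ, mul_comm]
        exact mul_dvd_mul_left 2 d2
      have := dvd_sub e1 e2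
      have h' : (2 ^ (k+1) : ℤ_[2]) ∣ (Q (2*y) - 2 * Q y) := by
        convert this using 1; ring
      exact dvd_trans (pow_dvd_pow 2 (Nat.le_succ k)) h'
    have := aux_zero _ key
    exact sub_eq_zero.mp this
  intro x
  have : Q (2 * Φ x) = 2 * x := by rw [hQ2, hΦr]
  calc Φ (2 * x) = Φ (Q (2 * Φ x)) := by rw [this]
    _ = 2 * Φ x := hΦl _
end

section
/- For any strictly increasing sequence 0 ≤ d₀ < d₁ < d₂ < ... of natural numbers, Φ_{m,r}(Σ_j 2^{d_j}) = -r · Σ_j m^{-(j+1)} 2^{d_j}, where both sums converge in ℤ₂ (including the case of a finite sequence). In particular this generalizes Bernstein's formula for Φ_{3,1}. -/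
open scoped Classical

noncomputable section

lemma s7_two_prime : Prime (2 : ℤ_[2]) := by
  have := PadicInt.prime_p (p := 2)
  simpa using this

lemma s7_eq_of_dvd {a b : ℤ_[2]} (h : ∀ k : ℕ, (2:ℤ_[2])^k ∣ a - b) : a = b := by
  have : ‖a - b‖ = 0 := by
    by_contra hne
    have hpos : 0 < ‖a - b‖ := lt_of_le_of_ne (norm_nonneg _) (Ne.symm hne)
    obtain ⟨k, hk⟩ := exists_pow_lt_of_lt_one hpos (by norm_num : ((2:ℝ))⁻¹ < 1)
    have hle : ‖a - b‖ ≤ ((2:ℝ)) ^ (-(k:ℤ)) := by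
      have := (PadicInt.norm_le_pow_iff_mem_span_pow (a - b) k).2
        (by rw [Ideal.mem_span_singleton]; simpa using h k)
      simpa using this
    rw [zpow_neg, zpow_natCast] at hle
    have : ((2:ℝ)^k)⁻¹ = ((2:ℝ)⁻¹)^k := by rw [inv_pow]
    rw [this] at hle
    exact absurd (lt_of_le_of_lt hle hk) (lt_irrefl _)
  exact sub_eq_zero.1 (norm_eq_zero.1 this)

abbrev S7P := (ℕ → ℕ) × (ℕ → ℤ_[2])

def s7step (p : S7P) : S7P :=
  if p.2 0 = 0 then p
  else if p.1 0 = 0 then (fun j => p.1 (j+1) - 1, fun j => p.2 (j+1))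
  else (fun j => p.1 j - 1, p.2)

def s7Good (p : S7P) : Prop :=
  StrictMono p.1 ∧ (∀ j, p.2 j = 0 ∨ p.2 j = 1) ∧ ∀ j, p.2 j = 0 → p.2 (j+1) = 0

def s7X (p : S7P) : ℤ_[2] := ∑' j : ℕ, p.2 j * 2 ^ (p.1 j)
def s7Y (M : ℤ_[2]) (p : S7P) : ℤ_[2] := ∑' j : ℕ, p.2 j * M ^ (j+1) * 2 ^ (p.1 j)
def s7t (p : S7P) : ℤ_[2] := if p.2 0 = 1 ∧ p.1 0 = 0 then 1 else 0

lemma s7_add_le {d : ℕ → ℕ} (hd : StrictMono d) (j : ℕ) : d 0 + j ≤ d j := by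
  induction j with
  | zero => simp
  | succ n ih =>
    have : d n < d (n+1) := hd (by omega)
    omega

lemma s7_summ {d : ℕ → ℕ} (hd : ∀ j, j ≤ d j) (g : ℕ → ℤ_[2]) :
    Summable fun j => g j * 2 ^ d j := by
  apply Summable.of_norm_bounded (g := fun j => ((2:ℝ))⁻¹ ^ j)
    (summable_geometric_of_lt_one (by norm_num) (by norm_num))
  intro j
  have h2 : ‖(2:ℤ_[2])‖ = (2:ℝ)⁻¹ := by
    have := PadicInt.norm_p (p := 2); simpa using this
  calc ‖g j * 2 ^ d j‖ ≤ ‖g j‖ * ‖(2:ℤ_[2]) ^ d j‖ := norm_mul_le _ _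
    _ ≤ 1 * ‖(2:ℤ_[2]) ^ d j‖ := by
        apply mul_le_mul_of_nonneg_right (PadicInt.norm_le_one _) (norm_nonneg _)
    _ = ((2:ℝ)⁻¹) ^ d j := by rw [one_mul, norm_pow, h2]
    _ ≤ ((2:ℝ)⁻¹) ^ j := pow_le_pow_of_le_one (by norm_num) (by norm_num) (hd j)

lemma s7_good_step {p : S7P} (h : s7Good p) : s7Good (s7step p) := by
  obtain ⟨hd, hf01, hfd⟩ := h
  unfold s7step
  split
  · exact ⟨hd, hf01, hfd⟩
  · rename_i hf0
    split
    · rename_i hd0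
      refine ⟨?_, fun j => hf01 _, fun j hj => hfd _ hj⟩
      apply strictMono_nat_of_lt_succ
      intro n
      have h1 : p.1 (n+1) < p.1 (n+1+1) := hd (by omega)
      have h4 : p.1 0 < p.1 (n+1) := hd (by omega)
      simp only []
      omega
    · rename_i hd0
      refine ⟨?_, hf01, hfd⟩
      apply strictMono_nat_of_lt_succ
      intro n
      have h1 : p.1 n < p.1 (n+1) := hd (by omega)
      have h2 := s7_add_le hd n
      simp only []
      omega

lemma s7_summ' {p : S7P} (h : StrictMono p.1) (g : ℕ → ℤ_[2]) :
    Summable fun j => g j * 2 ^ (p.1 j) := s7_summ (fun j => h.le_apply) g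

lemma s7_zero_all {p : S7P} (h : s7Good p) (h0 : p.2 0 = 0) : ∀ j, p.2 j = 0 := by
  intro j
  induction j with
  | zero => exact h0
  | succ n ih => exact h.2.2 n ih

lemma s7_X_zero {p : S7P} (h : s7Good p) (h0 : p.2 0 = 0) : s7X p = 0 := by
  unfold s7X
  have : ∀ j : ℕ, p.2 j * 2 ^ p.1 j = 0 := fun j => by rw [s7_zero_all h h0 j, zero_mul]
  rw [tsum_congr this, tsum_zero]

lemma s7_Y_zero {p : S7P} (M : ℤ_[2]) (h : s7Good p) (h0 : p.2 0 = 0) : s7Y M p = 0 := by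
  unfold s7Y
  have : ∀ j : ℕ, p.2 j * M ^ (j+1) * 2 ^ p.1 j = 0 := fun j => by
    rw [s7_zero_all h h0 j, zero_mul, zero_mul]
  rw [tsum_congr this, tsum_zero]

lemma s7_X_step {p : S7P} (h : s7Good p) : s7X p = s7t p + 2 * s7X (s7step p) := by
  by_cases h0 : p.2 0 = 0
  · have ht : s7t p = 0 := by
      unfold s7t; rw [if_neg]; rintro ⟨h1, -⟩; rw [h0] at h1; exact one_ne_zero h1.symm
    rw [ht, s7_X_zero h h0]
    unfold s7step; rw [if_pos h0, s7_X_zero h h0, mul_zero, add_zero]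
  · have hf1 : p.2 0 = 1 := (h.2.1 0).resolve_left h0
    by_cases hd0 : p.1 0 = 0
    · have ht : s7t p = 1 := by unfold s7t; rw [if_pos ⟨hf1, hd0⟩]
      have hs : s7step p = (fun j => p.1 (j+1) - 1, fun j => p.2 (j+1)) := by
        unfold s7step; rw [if_neg h0, if_pos hd0]
      have hmono : StrictMono (s7step p).1 := (s7_good_step h).1
      rw [hs] at hmono
      have hsum : Summable fun j : ℕ => p.2 j * 2 ^ p.1 j := s7_summ' h.1 _
      unfold s7X
      rw [Summable.tsum_eq_zero_add hsum, hf1, hd0, ht, hs]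
      simp only [pow_zero, one_mul]
      congr 1
      have hpt : ∀ j : ℕ, p.2 (j+1) * 2 ^ p.1 (j+1) = 2 * (p.2 (j+1) * 2 ^ (p.1 (j+1) - 1)) := by
        intro j
        have h1 : 1 ≤ p.1 (j+1) := by
          have := h.1 (show 0 < j+1 by omega); omega
        conv_lhs => rw [show p.1 (j+1) = (p.1 (j+1) - 1) + 1 from by omega]
        ring
      rw [tsum_congr hpt, Summable.tsum_mul_left 2 (s7_summ' hmono (fun j => p.2 (j+1)))]
    · have ht : s7t p = 0 := by unfold s7t; rw [if_neg]; rintro ⟨-, h1⟩; exact hd0 h1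
      have hs : s7step p = (fun j => p.1 j - 1, p.2) := by
        unfold s7step; rw [if_neg h0, if_neg hd0]
      have hmono : StrictMono (s7step p).1 := (s7_good_step h).1
      rw [hs] at hmono
      rw [ht, zero_add, hs]
      unfold s7X
      have hpt : ∀ j : ℕ, p.2 j * 2 ^ p.1 j = 2 * (p.2 j * 2 ^ (p.1 j - 1)) := by
        intro j
        have h1 : 1 ≤ p.1 j := by
          have := s7_add_le h.1 j; omega
        conv_lhs => rw [show p.1 j = (p.1 j - 1) + 1 from by omega]
        ring
      rw [tsum_congr hpt, Summable.tsum_mul_left 2 (s7_summ' hmono p.2)]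

lemma s7_unit_not_dvd {a b : ℤ_[2]} (hab : a * b = 1) : ¬ (2:ℤ_[2]) ∣ b := by
  intro h
  exact s7_two_prime.not_unit (isUnit_of_dvd_one (h.trans ⟨a, by rw [← hab]; ring⟩))

lemma s7_odd_not_dvd {r : ℤ} (hr : Odd r) : ¬ (2:ℤ_[2]) ∣ (r:ℤ_[2]) := by
  obtain ⟨k, hk⟩ := hr
  intro h
  have h1 : (2:ℤ_[2]) ∣ ((r:ℤ_[2]) - 2 * (k:ℤ_[2])) := Dvd.dvd.sub h ⟨(k:ℤ_[2]), rfl⟩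
  have h2 : (r:ℤ_[2]) - 2 * (k:ℤ_[2]) = 1 := by
    have : (r:ℤ_[2]) = 2 * (k:ℤ_[2]) + 1 := by
      rw [hk]; push_cast; ring
    rw [this]; ring
  rw [h2] at h1
  exact s7_two_prime.not_unit (isUnit_of_dvd_one h1)

lemma s7_Y_even {p : S7P} (M : ℤ_[2]) (h : s7Good p) (h0 : p.2 0 ≠ 0) (hd0 : p.1 0 ≠ 0) :
    s7Y M p = 2 * s7Y M (s7step p) := by
  have hs : s7step p = (fun j => p.1 j - 1, p.2) := by
    unfold s7step; rw [if_neg h0, if_neg hd0]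
  have hmono : StrictMono (s7step p).1 := (s7_good_step h).1
  rw [hs] at hmono
  rw [hs]
  unfold s7Y
  have hpt : ∀ j : ℕ, p.2 j * M ^ (j+1) * 2 ^ p.1 j
      = 2 * (p.2 j * M ^ (j+1) * 2 ^ (p.1 j - 1)) := by
    intro j
    have h1 : 1 ≤ p.1 j := by have := s7_add_le h.1 j; omega
    conv_lhs => rw [show p.1 j = (p.1 j - 1) + 1 from by omega]
    ring
  rw [tsum_congr hpt,
    Summable.tsum_mul_left 2 (s7_summ (fun j => hmono.le_apply) (fun j => p.2 j * M ^ (j+1)))]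

lemma s7_Y_odd {p : S7P} (M : ℤ_[2]) (h : s7Good p) (h0 : p.2 0 ≠ 0) (hd0 : p.1 0 = 0) :
    s7Y M p = M + 2 * (M * s7Y M (s7step p)) := by
  have hf1 : p.2 0 = 1 := (h.2.1 0).resolve_left h0
  have hs : s7step p = (fun j => p.1 (j+1) - 1, fun j => p.2 (j+1)) := by
    unfold s7step; rw [if_neg h0, if_pos hd0]
  have hmono : StrictMono (s7step p).1 := (s7_good_step h).1
  rw [hs] at hmono
  rw [hs]
  unfold s7Y
  have hsum : Summable fun j : ℕ => p.2 j * M ^ (j+1) * 2 ^ p.1 j :=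
    s7_summ' h.1 (fun j => p.2 j * M ^ (j+1))
  rw [Summable.tsum_eq_zero_add hsum, hf1, hd0]
  simp only [zero_add, pow_zero, pow_one, one_mul, mul_one]
  congr 1
  have hpt : ∀ j : ℕ, p.2 (j+1) * M ^ (j+1+1) * 2 ^ p.1 (j+1)
      = (2 * M) * (p.2 (j+1) * M ^ (j+1) * 2 ^ (p.1 (j+1) - 1)) := by
    intro j
    have h1 : 1 ≤ p.1 (j+1) := by
      have := h.1 (show 0 < j+1 by omega); omega
    conv_lhs => rw [show p.1 (j+1) = (p.1 (j+1) - 1) + 1 from by omega]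
    ring
  rw [tsum_congr hpt,
    Summable.tsum_mul_left (2*M) (s7_summ (fun j => hmono.le_apply)
      (fun j => p.2 (j+1) * M ^ (j+1)))]
  ring

lemma s7_T_step (m r : ℤ) (hr : Odd r) (M : ℤ_[2]) (hmInv : (m : ℤ_[2]) * M = 1)
    (T : ℤ_[2] → ℤ_[2])
    (hT : ∀ x, 2 * T x = if (2 : ℤ_[2]) ∣ x then x else (m : ℤ_[2]) * x + (r : ℤ_[2]))
    {p : S7P} (hp : s7Good p) :
    T (-(r:ℤ_[2]) * s7Y M p) = -(r:ℤ_[2]) * s7Y M (s7step p) ∧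
    ((if (2:ℤ_[2]) ∣ (-(r:ℤ_[2]) * s7Y M p) then (0:ℤ_[2]) else 1) = s7t p) := by
  have h2ne : (2:ℤ_[2]) ≠ 0 := s7_two_prime.ne_zero
  by_cases h0 : p.2 0 = 0
  · have hY : s7Y M p = 0 := s7_Y_zero M hp h0
    have hs : s7step p = p := by unfold s7step; rw [if_pos h0]
    have ht : s7t p = 0 := by
      unfold s7t; rw [if_neg]; rintro ⟨h1, -⟩; rw [h0] at h1; exact one_ne_zero h1.symm
    rw [hY, hs, hY, mul_zero, ht]
    constructor
    · apply mul_left_cancel₀ h2ne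
      rw [hT 0, if_pos (dvd_zero _), mul_zero]
    · rw [if_pos (dvd_zero _)]
  · by_cases hd0 : p.1 0 = 0
    · -- odd case
      have hY := s7_Y_odd M hp h0 hd0
      have hf1 : p.2 0 = 1 := (hp.2.1 0).resolve_left h0
      have ht : s7t p = 1 := by unfold s7t; rw [if_pos ⟨hf1, hd0⟩]
      set Y' := s7Y M (s7step p) with hY'
      have hodd : ¬ (2:ℤ_[2]) ∣ (-(r:ℤ_[2]) * s7Y M p) := by
        intro hdvd
        have h1 : (2:ℤ_[2]) ∣ ((r:ℤ_[2]) * M) := by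
          have : (r:ℤ_[2]) * M
              = -(-(r:ℤ_[2]) * s7Y M p) - 2 * ((r:ℤ_[2]) * (M * Y')) := by
            rw [hY]; ring
          rw [this]
          exact dvd_sub (dvd_neg.mpr hdvd) ⟨(r:ℤ_[2]) * (M * Y'), rfl⟩
        rcases s7_two_prime.2.2 _ _ h1 with h2 | h2
        · exact s7_odd_not_dvd hr h2
        · exact s7_unit_not_dvd hmInv h2
      refine ⟨?_, by rw [if_neg hodd, ht]⟩
      apply mul_left_cancel₀ h2ne
      rw [hT _, if_neg hodd, hY]
      linear_combination (-(r:ℤ_[2]) - 2 * (r:ℤ_[2]) * Y') * hmInv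
    · -- even case
      have hY := s7_Y_even M hp h0 hd0
      have ht : s7t p = 0 := by
        unfold s7t; rw [if_neg]; rintro ⟨-, h1⟩; exact hd0 h1
      have heven : (2:ℤ_[2]) ∣ (-(r:ℤ_[2]) * s7Y M p) := by
        rw [hY]; exact ⟨-(r:ℤ_[2]) * s7Y M (s7step p), by ring⟩
      refine ⟨?_, by rw [if_pos heven, ht]⟩
      apply mul_left_cancel₀ h2ne
      rw [hT _, if_pos heven, hY]
      ring

lemma s7_iter (m r : ℤ) (hr : Odd r) (M : ℤ_[2]) (hmInv : (m : ℤ_[2]) * M = 1)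
    (T : ℤ_[2] → ℤ_[2])
    (hT : ∀ x, 2 * T x = if (2 : ℤ_[2]) ∣ x then x else (m : ℤ_[2]) * x + (r : ℤ_[2]))
    {p : S7P} (hp : s7Good p) (k : ℕ) :
    T^[k] (-(r:ℤ_[2]) * s7Y M p) = -(r:ℤ_[2]) * s7Y M (s7step^[k] p) ∧
      s7Good (s7step^[k] p) := by
  induction k with
  | zero => exact ⟨rfl, hp⟩
  | succ n ih =>
    rw [Function.iterate_succ_apply', Function.iterate_succ_apply', ih.1]
    exact ⟨(s7_T_step m r hr M hmInv T hT ih.2).1, s7_good_step ih.2⟩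

lemma s7_digits (k : ℕ) : ∀ (p : S7P), s7Good p →
    (2:ℤ_[2])^k ∣ s7X p - ∑ i ∈ Finset.range k, s7t (s7step^[i] p) * 2 ^ i := by
  induction k with
  | zero => intro p _; simp
  | succ n ih =>
    intro p hp
    obtain ⟨c, hc⟩ := ih (s7step p) (s7_good_step hp)
    refine ⟨c, ?_⟩
    rw [Finset.sum_range_succ']
    have hX := s7_X_step hp
    have hsum : ∑ i ∈ Finset.range n, s7t (s7step^[i+1] p) * 2 ^ (i+1)
        = 2 * ∑ i ∈ Finset.range n, s7t (s7step^[i] (s7step p)) * 2 ^ i := by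
      rw [Finset.mul_sum]
      apply Finset.sum_congr rfl
      intro i _
      rw [Function.iterate_succ_apply]
      ring
    rw [hsum]
    simp only [Function.iterate_zero, id_eq, pow_zero, mul_one]
    linear_combination hX + 2 * hc

lemma s7_Q (m r : ℤ) (hr : Odd r) (M : ℤ_[2]) (hmInv : (m : ℤ_[2]) * M = 1)
    (T Q : ℤ_[2] → ℤ_[2])
    (hT : ∀ x, 2 * T x = if (2 : ℤ_[2]) ∣ x then x else (m : ℤ_[2]) * x + (r : ℤ_[2]))
    (hQ : ∀ x (k : ℕ), (2 ^ k : ℤ_[2]) ∣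
      (Q x - ∑ i ∈ Finset.range k, (if (2 : ℤ_[2]) ∣ T^[i] x then 0 else 1) * 2 ^ i))
    {p : S7P} (hp : s7Good p) :
    Q (-(r:ℤ_[2]) * s7Y M p) = s7X p := by
  apply s7_eq_of_dvd
  intro k
  have h1 := hQ (-(r:ℤ_[2]) * s7Y M p) k
  have h2 := s7_digits k p hp
  have h3 : ∑ i ∈ Finset.range k,
      (if (2 : ℤ_[2]) ∣ T^[i] (-(r:ℤ_[2]) * s7Y M p) then (0:ℤ_[2]) else 1) * 2 ^ i
      = ∑ i ∈ Finset.range k, s7t (s7step^[i] p) * 2 ^ i := by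
    apply Finset.sum_congr rfl
    intro i _
    have hi := s7_iter m r hr M hmInv T hT hp i
    rw [hi.1, (s7_T_step m r hr M hmInv T hT hi.2).2]
  rw [h3] at h1
  obtain ⟨c1, hc1⟩ := h1
  obtain ⟨c2, hc2⟩ := h2
  exact ⟨c1 - c2, by rw [mul_sub, ← hc1, ← hc2]; ring⟩

end

/-- generalized Bernstein formula:
`Φ_{m,r}(Σ_j 2^{d_j}) = -r Σ_j m^{-(j+1)} 2^{d_j}` for any strictly increasing
sequence `d₀ < d₁ < …` of naturals (both the infinite and finite cases), the
infinite sums converging in `ℤ₂`. -/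
theorem stmt7 (m r : ℤ) (hm : Odd m) (hr : Odd r)
    (T Q Φ : ℤ_[2] → ℤ_[2])
    (hT : ∀ x, 2 * T x = if (2 : ℤ_[2]) ∣ x then x else (m : ℤ_[2]) * x + (r : ℤ_[2]))
    (hQ : ∀ x (k : ℕ), (2 ^ k : ℤ_[2]) ∣
      (Q x - ∑ i ∈ Finset.range k, (if (2 : ℤ_[2]) ∣ T^[i] x then 0 else 1) * 2 ^ i))
    (hΦl : Function.LeftInverse Φ Q) (hΦr : Function.RightInverse Φ Q)
    (mInv : ℤ_[2]) (hmInv : (m : ℤ_[2]) * mInv = 1) :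
    (∀ d : ℕ → ℕ, StrictMono d →
      Summable (fun j : ℕ => (2 : ℤ_[2]) ^ (d j)) ∧
      Summable (fun j : ℕ => mInv ^ (j + 1) * 2 ^ (d j)) ∧
      Φ (∑' j : ℕ, (2 : ℤ_[2]) ^ (d j)) =
        -(r : ℤ_[2]) * ∑' j : ℕ, mInv ^ (j + 1) * 2 ^ (d j)) ∧
    (∀ (n : ℕ) (d : ℕ → ℕ), StrictMono d →
      Φ (∑ j ∈ Finset.range n, (2 : ℤ_[2]) ^ (d j)) =
        -(r : ℤ_[2]) * ∑ j ∈ Finset.range n, mInv ^ (j + 1) * 2 ^ (d j)) := by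
  constructor
  · intro d hd
    set p : S7P := (d, fun _ => (1:ℤ_[2])) with hpdef
    have hp : s7Good p := ⟨hd, fun j => Or.inr rfl, fun j h => absurd h one_ne_zero⟩
    have hX : s7X p = ∑' j : ℕ, (2:ℤ_[2]) ^ (d j) := tsum_congr fun j => one_mul _
    have hY : s7Y mInv p = ∑' j : ℕ, mInv ^ (j+1) * 2 ^ (d j) :=
      tsum_congr fun j => by rw [one_mul]
    refine ⟨?_, ?_, ?_⟩
    · have := s7_summ (fun j => hd.le_apply) (fun _ => (1:ℤ_[2]))
      simpa using this
    · exact s7_summ (fun j => hd.le_apply) (fun j => mInv ^ (j+1))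
    · have hq := s7_Q m r hr mInv hmInv T Q hT hQ hp
      rw [← hX, ← hq, hΦl (-(r:ℤ_[2]) * s7Y mInv p), hY]
  · intro n d hd
    set p : S7P := (d, fun j => if j < n then (1:ℤ_[2]) else 0) with hpdef
    have hp : s7Good p := by
      refine ⟨hd, fun j => ?_, fun j hj => ?_⟩
      · by_cases h : j < n
        · exact Or.inr (if_pos h)
        · exact Or.inl (if_neg h)
      · simp only [hpdef] at hj ⊢
        by_cases h : j < n
        · rw [if_pos h] at hj; exact absurd hj one_ne_zero
        · rw [if_neg (show ¬ (j+1 < n) by omega)]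
    have hX : s7X p = ∑ j ∈ Finset.range n, (2:ℤ_[2]) ^ (d j) := by
      unfold s7X
      rw [tsum_eq_sum (s := Finset.range n)
        (fun b hb => by
          simp only [Finset.mem_range, not_lt] at hb
          simp only [hpdef]
          rw [if_neg (by omega), zero_mul])]
      exact Finset.sum_congr rfl fun j hj => by
        simp only [Finset.mem_range] at hj
        simp only [hpdef]
        rw [if_pos hj, one_mul]
    have hY : s7Y mInv p = ∑ j ∈ Finset.range n, mInv ^ (j+1) * 2 ^ (d j) := by
      unfold s7Y
      rw [tsum_eq_sum (s := Finset.range n)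
        (fun b hb => by
          simp only [Finset.mem_range, not_lt] at hb
          simp only [hpdef]
          rw [if_neg (by omega), zero_mul, zero_mul])]
      exact Finset.sum_congr rfl fun j hj => by
        simp only [Finset.mem_range] at hj
        simp only [hpdef]
        rw [if_pos hj, one_mul]
    have hq := s7_Q m r hr mInv hmInv T Q hT hQ hp
    rw [← hX, ← hq, hΦl (-(r:ℤ_[2]) * s7Y mInv p), hY]
end

section
/- Suppose m ≠ 2 (m odd). For all x ∈ ℤ₂ and all n ∈ ℕ: r/(m-2) + Ω_{m,r}(2^n x) = (2/m)^n · (r/(m-2) + Ω_{m,r}(x)), where m-2 and m are odd, hence units in ℤ₂. -/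
open scoped Classical

lemma zero_of_pow_dvd {a : ℤ_[2]} (h : ∀ k : ℕ, (2 ^ k : ℤ_[2]) ∣ a) : a = 0 := by
  by_contra ha
  have hn : 0 < ‖a‖ := norm_pos_iff.mpr ha
  obtain ⟨k, hk⟩ := exists_pow_lt_of_lt_one hn (by norm_num : (1/2 : ℝ) < 1)
  have hmem : a ∈ (Ideal.span {(2 : ℤ_[2]) ^ k} : Ideal ℤ_[2]) :=
    Ideal.mem_span_singleton.mpr (h k)
  have h2 : ((2:ℕ) : ℤ_[2]) ^ k = (2 : ℤ_[2]) ^ k := by norm_num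
  have := (PadicInt.norm_le_pow_iff_mem_span_pow a k).mpr (by rw [h2]; exact hmem)
  have h3 : ((2:ℕ):ℝ) ^ (-(k:ℤ)) = (1/2)^k := by
    push_cast; rw [zpow_neg, zpow_natCast, one_div, inv_pow]
  rw [h3] at this
  linarith

lemma padic_two_ne_zero : (2 : ℤ_[2]) ≠ 0 := by
  intro h
  have := congrArg (‖·‖) h
  simp only [norm_zero] at this
  rw [show ((2:ℤ_[2])) = ((2:ℕ) : ℤ_[2]) by norm_num, PadicInt.norm_p (p := 2)] at this
  norm_num at this

lemma padic_two_not_dvd_one : ¬ ((2 : ℤ_[2]) ∣ 1) := by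
  intro h
  have hu : IsUnit (2 : ℤ_[2]) := isUnit_of_dvd_one h
  have := PadicInt.isUnit_iff.mp hu
  rw [show ((2:ℤ_[2])) = ((2:ℕ) : ℤ_[2]) by norm_num, PadicInt.norm_p (p := 2)] at this
  norm_num at this

/-- for odd `m ≠ 2`:
`r/(m-2) + Ω_{m,r}(2^n x) = (2/m)^n (r/(m-2) + Ω_{m,r}(x))`, with the inverses of
the odd (hence unit) elements `m` and `m - 2` of `ℤ₂` given explicitly. -/
theorem stmt13 (m r : ℤ) (hm : Odd m) (hr : Odd r) (hm2 : m ≠ 2)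
    (T Q Φ : ℤ_[2] → ℤ_[2])
    (hT : ∀ x, 2 * T x = if (2 : ℤ_[2]) ∣ x then x else (m : ℤ_[2]) * x + (r : ℤ_[2]))
    (hQ : ∀ x (k : ℕ), (2 ^ k : ℤ_[2]) ∣
      (Q x - ∑ i ∈ Finset.range k, (if (2 : ℤ_[2]) ∣ T^[i] x then 0 else 1) * 2 ^ i))
    (hΦl : Function.LeftInverse Φ Q) (hΦr : Function.RightInverse Φ Q)
    (mInv m2Inv : ℤ_[2]) (hmInv : (m : ℤ_[2]) * mInv = 1)
    (hm2Inv : ((m : ℤ_[2]) - 2) * m2Inv = 1) :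
    ∀ (x : ℤ_[2]) (n : ℕ),
      (r : ℤ_[2]) * m2Inv + Φ (-1 - Q (2 ^ n * x)) =
        (2 * mInv) ^ n * ((r : ℤ_[2]) * m2Inv + Φ (-1 - Q x)) := by
  have h2 : (2 : ℤ_[2]) ≠ 0 := padic_two_ne_zero
  have hmne : (m : ℤ_[2]) ≠ 0 := left_ne_zero_of_mul_eq_one hmInv
  -- T (2x) = x
  have hT2 : ∀ x, T (2 * x) = x := by
    intro x
    have := hT (2 * x)
    rw [if_pos ⟨x, rfl⟩] at this
    exact mul_left_cancel₀ h2 this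
  -- Q (2x) = 2 Q x
  have hQ2 : ∀ x, Q (2 * x) = 2 * Q x := by
    intro x
    have key : ∀ k : ℕ, (2 ^ k : ℤ_[2]) ∣ (Q (2 * x) - 2 * Q x) := by
      intro k
      cases k with
      | zero => simpa using one_dvd _
      | succ k =>
        have h1 := hQ (2 * x) (k + 1)
        have h2' := hQ x k
        have hsum : (∑ i ∈ Finset.range (k+1),
            (if (2 : ℤ_[2]) ∣ T^[i] (2*x) then 0 else 1) * 2 ^ i : ℤ_[2]) =
            2 * ∑ i ∈ Finset.range k,
            (if (2 : ℤ_[2]) ∣ T^[i] x then 0 else 1) * 2 ^ i := by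
          rw [Finset.sum_range_succ']
          have hiter : ∀ i, T^[i+1] (2*x) = T^[i] x := by
            intro i
            rw [Function.iterate_succ_apply, hT2]
          simp only [hiter, Function.iterate_zero, id_eq]
          rw [show @ite ℤ_[2] (2 ∣ 2 * x) (Classical.propDecidable (2 ∣ T^[0] (2 * x))) 0 1 = 0 from if_pos ⟨x, rfl⟩, Finset.mul_sum]
          simp only [zero_mul, add_zero]
          exact Finset.sum_congr rfl fun i _ => by ring
        have heq : Q (2*x) - 2 * Q x =
            (Q (2*x) - ∑ i ∈ Finset.range (k+1),
              (if (2 : ℤ_[2]) ∣ T^[i] (2*x) then 0 else 1) * 2 ^ i)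
            - 2 * (Q x - ∑ i ∈ Finset.range k,
              (if (2 : ℤ_[2]) ∣ T^[i] x then 0 else 1) * 2 ^ i) := by
          linear_combination hsum
        rw [heq]
        refine dvd_sub h1 ?_
        rw [pow_succ']
        exact mul_dvd_mul_left 2 h2'
    exact sub_eq_zero.mp (zero_of_pow_dvd key)
  -- Q y = ε y + 2 Q (T y)
  have hQB : ∀ y, Q y = (if (2 : ℤ_[2]) ∣ y then 0 else 1) + 2 * Q (T y) := by
    intro y
    have key : ∀ k : ℕ,
        (2 ^ k : ℤ_[2]) ∣ (Q y - ((if (2 : ℤ_[2]) ∣ y then 0 else 1) + 2 * Q (T y))) := by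
      intro k
      cases k with
      | zero => simpa using one_dvd _
      | succ k =>
        have h1 := hQ y (k + 1)
        have h2' := hQ (T y) k
        have hsum : (∑ i ∈ Finset.range (k+1),
            (if (2 : ℤ_[2]) ∣ T^[i] y then 0 else 1) * 2 ^ i : ℤ_[2]) =
            (if (2 : ℤ_[2]) ∣ y then 0 else 1) + 2 * ∑ i ∈ Finset.range k,
            (if (2 : ℤ_[2]) ∣ T^[i] (T y) then 0 else 1) * 2 ^ i := by
          rw [Finset.sum_range_succ']
          have hiter : ∀ i, T^[i+1] y = T^[i] (T y) := by
            intro i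
            rw [Function.iterate_succ_apply]
          simp only [hiter, Function.iterate_zero, id_eq]
          rw [Finset.mul_sum, pow_zero, mul_one, add_comm]
          congr 1
          exact Finset.sum_congr rfl fun i _ => by ring
        have heq : Q y - ((if (2 : ℤ_[2]) ∣ y then 0 else 1) + 2 * Q (T y)) =
            (Q y - ∑ i ∈ Finset.range (k+1),
              (if (2 : ℤ_[2]) ∣ T^[i] y then 0 else 1) * 2 ^ i)
            - 2 * (Q (T y) - ∑ i ∈ Finset.range k,
              (if (2 : ℤ_[2]) ∣ T^[i] (T y) then 0 else 1) * 2 ^ i) := by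
          linear_combination hsum
        rw [heq]
        refine dvd_sub h1 ?_
        rw [pow_succ']
        exact mul_dvd_mul_left 2 h2'
    exact sub_eq_zero.mp (zero_of_pow_dvd key)
  -- Φ (1 + 2z) satisfies m Φ(1+2z) + r = 2 Φ z
  have hΦstep : ∀ z : ℤ_[2], (m : ℤ_[2]) * Φ (1 + 2 * z) + r = 2 * Φ z := by
    intro z
    have hQy : Q (Φ (1 + 2 * z)) = 1 + 2 * z := hΦr _
    have hb := hQB (Φ (1 + 2 * z))
    by_cases hd : (2 : ℤ_[2]) ∣ Φ (1 + 2 * z)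
    · exfalso
      rw [if_pos hd] at hb
      exact padic_two_not_dvd_one ⟨Q (T (Φ (1 + 2 * z))) - z, by linear_combination hb - hQy⟩
    · rw [if_neg hd] at hb
      have hz : z = Q (T (Φ (1 + 2 * z))) :=
        mul_left_cancel₀ h2 (by linear_combination hb - hQy)
      have hTy : T (Φ (1 + 2 * z)) = Φ z := by
        conv_rhs => rw [hz]
        rw [hΦl]
      have ht := hT (Φ (1 + 2 * z))
      rw [if_neg hd, hTy] at ht
      linear_combination -ht
  intro x n
  induction n with
  | zero => simp
  | succ n ih =>
    have hx : (2 : ℤ_[2]) ^ (n+1) * x = 2 * (2 ^ n * x) := by ring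
    rw [hx, hQ2]
    have hrw : (-1 : ℤ_[2]) - 2 * Q (2 ^ n * x) = 1 + 2 * (-1 - Q (2 ^ n * x)) := by ring
    rw [hrw]
    have step := hΦstep (-1 - Q (2 ^ n * x))
    have key : (r : ℤ_[2]) * m2Inv + Φ (1 + 2 * (-1 - Q (2 ^ n * x))) =
        2 * mInv * ((r : ℤ_[2]) * m2Inv + Φ (-1 - Q (2 ^ n * x))) := by
      apply mul_left_cancel₀ hmne
      linear_combination step - (2*(r:ℤ_[2])*m2Inv + 2*Φ (-1 - Q (2 ^ n * x)))*hmInv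
        + (r:ℤ_[2])*hm2Inv
    rw [key, ih, pow_succ]
    ring
end

section
/- For each k ∈ ℕ, the induced map on ℤ/2^kℤ given by x mod 2^k ↦ Q_{k,m,r}(x) mod 2^k is a permutation of ℤ/2^kℤ. -/
private lemma key16 (m r : ℤ) (hm : Odd m) (T : ℤ → ℤ)
    (hT : ∀ x : ℤ, 2 * T x = if 2 ∣ x then x else m * x + r) :
    ∀ k : ℕ, ∀ a b : ℤ,
      (∑ i ∈ Finset.range k, (if 2 ∣ T^[i] a then (0 : ℤ) else 1) * 2 ^ i) ≡
      (∑ i ∈ Finset.range k, (if 2 ∣ T^[i] b then (0 : ℤ) else 1) * 2 ^ i) [ZMOD 2 ^ k] →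
      a ≡ b [ZMOD 2 ^ k] := by
  intro k
  induction k with
  | zero => intro a b _; simp [Int.ModEq]
  | succ k ih =>
    intro a b h
    have hsum : ∀ c : ℤ,
        (∑ i ∈ Finset.range (k + 1), (if 2 ∣ T^[i] c then (0 : ℤ) else 1) * 2 ^ i) =
        (if 2 ∣ c then (0 : ℤ) else 1) +
          2 * ∑ i ∈ Finset.range k, (if 2 ∣ T^[i] (T c) then (0 : ℤ) else 1) * 2 ^ i := by
      intro c
      rw [Finset.sum_range_succ']
      rw [add_comm, Finset.mul_sum]
      congr 1
      · split_ifs <;> simp_all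
      · apply Finset.sum_congr rfl
        intro i _
        rw [Function.iterate_succ_apply]
        ring
    rw [hsum a, hsum b] at h
    set u : ℤ := if 2 ∣ a then (0 : ℤ) else 1 with hu
    set v : ℤ := if 2 ∣ b then (0 : ℤ) else 1 with hv
    set s : ℤ := ∑ i ∈ Finset.range k, (if 2 ∣ T^[i] (T a) then (0 : ℤ) else 1) * 2 ^ i
    set t : ℤ := ∑ i ∈ Finset.range k, (if 2 ∣ T^[i] (T b) then (0 : ℤ) else 1) * 2 ^ i
    have hdvd : (2 : ℤ) ^ (k + 1) ∣ (v + 2 * t) - (u + 2 * s) := Int.modEq_iff_dvd.mp h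
    -- parities agree
    have hpar : u = v := by
      have h2 : (2 : ℤ) ∣ (v + 2 * t) - (u + 2 * s) :=
        dvd_trans (dvd_pow_self 2 (Nat.succ_ne_zero k)) hdvd
      rcases h2 with ⟨c, hc⟩
      by_cases ha : 2 ∣ a <;> by_cases hb : 2 ∣ b <;> simp [hu, hv, ha, hb] at hc ⊢ <;> omega
    rw [hpar] at hdvd
    have hdvd2 : (2 : ℤ) ^ k ∣ t - s := by
      have : (2 : ℤ) * 2 ^ k ∣ 2 * (t - s) := by
        rw [pow_succ] at hdvd
        have he : (v + 2 * t) - (v + 2 * s) = 2 * (t - s) := by ring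
        rw [he] at hdvd
        rw [mul_comm] at hdvd
        exact hdvd
      exact (mul_dvd_mul_iff_left (two_ne_zero)).mp this
    have hTab : T a ≡ T b [ZMOD 2 ^ k] := ih (T a) (T b) (Int.modEq_iff_dvd.mpr hdvd2)
    have hdvdT : (2 : ℤ) ^ (k + 1) ∣ 2 * T b - 2 * T a := by
      have h5 := mul_dvd_mul_left (2 : ℤ) (Int.modEq_iff_dvd.mp hTab)
      rw [pow_succ, mul_comm ((2:ℤ)^k) 2]
      calc (2:ℤ) * 2 ^ k ∣ 2 * (T b - T a) := h5
        _ = 2 * T b - 2 * T a := by ring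
    refine Int.modEq_iff_dvd.mpr ?_
    have hcop : IsCoprime ((2:ℤ) ^ (k+1)) m := by
      apply IsCoprime.pow_left
      obtain ⟨n, rfl⟩ := hm
      exact ⟨-n, 1, by ring⟩
    by_cases ha : 2 ∣ a
    · have hb : 2 ∣ b := by
        by_contra hb; simp [hu, hv, ha, hb] at hpar
      rw [hT a, hT b, if_pos ha, if_pos hb] at hdvdT
      exact hdvdT
    · have hb : ¬ 2 ∣ b := by
        by_contra hb; simp [hu, hv, ha, hb] at hpar
      rw [hT a, hT b, if_neg ha, if_neg hb] at hdvdT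
      have : (2:ℤ) ^ (k+1) ∣ m * (b - a) := by
        calc (2:ℤ)^(k+1) ∣ m * b + r - (m * a + r) := hdvdT
          _ = m * (b - a) := by ring
      exact hcop.dvd_of_dvd_mul_left this

/-- the map induced by `Q_{k,m,r}` on `ℤ/2^kℤ` is a permutation. -/
theorem stmt16 (m r : ℤ) (hm : Odd m) (hr : Odd r)
    (T : ℤ → ℤ)
    (hT : ∀ x : ℤ, 2 * T x = if 2 ∣ x then x else m * x + r) :
    ∀ k : ℕ, Function.Bijective (fun x : ZMod (2 ^ k) =>
      ((∑ i ∈ Finset.range k, (if 2 ∣ T^[i] (x.val : ℤ) then (0 : ℤ) else 1) * 2 ^ i :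
        ℤ) : ZMod (2 ^ k))) := by
  intro k
  haveI : NeZero ((2:ℕ) ^ k) := ⟨pow_ne_zero k two_ne_zero⟩
  rw [Finite.injective_iff_bijective.symm]
  intro x y hxy
  simp only at hxy
  have h1 : (∑ i ∈ Finset.range k, (if 2 ∣ T^[i] (x.val : ℤ) then (0 : ℤ) else 1) * 2 ^ i) ≡
      (∑ i ∈ Finset.range k, (if 2 ∣ T^[i] (y.val : ℤ) then (0 : ℤ) else 1) * 2 ^ i)
      [ZMOD 2 ^ k] := by
    have h0 := (ZMod.intCast_eq_intCast_iff _ _ (2 ^ k)).mp hxy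
    exact_mod_cast h0
  have h2 := key16 m r hm T hT k _ _ h1
  have h3 : ((x.val : ℤ) : ZMod (2 ^ k)) = ((y.val : ℤ) : ZMod (2 ^ k)) :=
    (ZMod.intCast_eq_intCast_iff _ _ (2 ^ k)).mpr (by exact_mod_cast h2)
  push_cast at h3
  rwa [ZMod.natCast_val, ZMod.natCast_val, ZMod.cast_id, ZMod.cast_id] at h3
end

section
/- Let m ≥ 3 be odd, r odd, and x ∈ ℤ₂. If ν_{m,r}(x) > log 2 / log m, where ν_{m,r}(x) = liminf_{k→∞} (1/k)·|{i < k : T_{m,r}^{(i)}(x) ≡ 0 (mod 2)}|, then the sequence of rationals Ω_{k,m,r}(x) converges in the real metric as k → ∞. -/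
open scoped Classical

open Finset

namespace Stmt18

/-- partial sums of parity bits of the `T`-orbit, as a natural number -/
noncomputable def sfun (T : ℤ_[2] → ℤ_[2]) (z : ℤ_[2]) : ℕ → ℕ
  | 0 => 0
  | k+1 => sfun T z k + (if (2:ℤ_[2]) ∣ T^[k] z then 0 else 2^k)

lemma sfun_lt (T : ℤ_[2] → ℤ_[2]) (z : ℤ_[2]) : ∀ k, sfun T z k < 2 ^ k
  | 0 => by simp [sfun]
  | k+1 => by
    have h := sfun_lt T z k
    have h2 : (2:ℕ)^(k+1) = 2^k + 2^k := by rw [pow_succ]; ring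
    unfold sfun
    split <;> omega

lemma sfun_cast (T : ℤ_[2] → ℤ_[2]) (z : ℤ_[2]) (k : ℕ) :
    ((sfun T z k : ℕ) : ℤ_[2]) =
      ∑ i ∈ Finset.range k, (if (2 : ℤ_[2]) ∣ T^[i] z then 0 else 1) * 2 ^ i := by
  induction k with
  | zero => simp [sfun]
  | succ k ih =>
    rw [Finset.sum_range_succ]
    show ((sfun T z k + (if (2:ℤ_[2]) ∣ T^[k] z then 0 else 2^k) : ℕ) : ℤ_[2]) = _
    rw [← ih]
    split <;> push_cast <;> ring

lemma eq_zero_of_forall_dvd {a : ℤ_[2]} (h : ∀ k : ℕ, (2^k : ℤ_[2]) ∣ a) : a = 0 := by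
  by_contra ha
  obtain ⟨k, hk⟩ := PadicInt.exists_pow_neg_lt 2 (norm_pos_iff.mpr ha)
  have h1 : ‖a‖ ≤ ((2:ℕ):ℝ) ^ (-(k:ℤ)) := by
    rw [PadicInt.norm_le_pow_iff_mem_span_pow a k, Ideal.mem_span_singleton]
    have h2 : ((2:ℕ):ℤ_[2]) = 2 := by norm_cast
    rw [h2]; exact h k
  exact absurd (lt_of_lt_of_le hk h1) (lt_irrefl _)

lemma int_dvd_of_padic {k : ℕ} {a : ℤ} (h : (2^k : ℤ_[2]) ∣ (a : ℤ_[2])) : (2^k : ℤ) ∣ a := by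
  have h2 : ((2:ℕ):ℤ_[2]) = 2 := by norm_cast
  have h3 : (((2:ℕ):ℤ_[2]))^k ∣ (a : ℤ_[2]) := by rw [h2]; exact h
  have h4 := (PadicInt.pow_p_dvd_int_iff k a).mp h3
  exact_mod_cast h4

section Main

variable {T Q : ℤ_[2] → ℤ_[2]}
  (hQ : ∀ z (k : ℕ), (2 ^ k : ℤ_[2]) ∣
      (Q z - ∑ i ∈ Finset.range k, (if (2 : ℤ_[2]) ∣ T^[i] z then 0 else 1) * 2 ^ i))

include hQ

lemma dvd_sub_sfun (z : ℤ_[2]) (k : ℕ) :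
    (2^k : ℤ_[2]) ∣ (Q z - ((sfun T z k : ℕ) : ℤ_[2])) := by
  rw [sfun_cast]; exact hQ z k

lemma Q_ext {z z' : ℤ_[2]}
    (h : ∀ i, ((2:ℤ_[2]) ∣ T^[i] z ↔ (2:ℤ_[2]) ∣ T^[i] z')) : Q z = Q z' := by
  have hs : ∀ k, sfun T z k = sfun T z' k := by
    intro k
    induction k with
    | zero => rfl
    | succ k ih =>
      show sfun T z k + _ = sfun T z' k + _
      rw [ih]
      congr 1
      by_cases hd : (2:ℤ_[2]) ∣ T^[k] z
      · rw [if_pos hd, if_pos ((h k).mp hd)]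
      · rw [if_neg hd, if_neg (fun hd' => hd ((h k).mpr hd'))]
  have hdvd : ∀ k : ℕ, (2^k : ℤ_[2]) ∣ (Q z - Q z') := by
    intro k
    have h1 := dvd_sub_sfun hQ z k
    have h2 := dvd_sub_sfun hQ z' k
    rw [hs k] at h1
    have := dvd_sub h1 h2
    simpa using this
  have := eq_zero_of_forall_dvd hdvd
  exact sub_eq_zero.mp this

lemma sfun_add_mod (z : ℤ_[2]) (n : ℕ) (hz : Q z = -1 - (n : ℤ_[2])) :
    ∀ i, sfun T z i + n % 2^i + 1 = 2^i := by
  intro i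
  induction i with
  | zero => simp [sfun, Nat.mod_one]
  | succ i ih =>
    have hP : 0 < (2:ℕ)^i := Nat.two_pow_pos i
    have hdvd : (2:ℕ)^(i+1) ∣ (1 + n + sfun T z (i+1)) := by
      have h1 := dvd_sub_sfun hQ z (i+1)
      rw [hz] at h1
      have h2 : (2^(i+1) : ℤ_[2]) ∣ ((((1 + n + sfun T z (i+1) : ℕ) : ℤ)) : ℤ_[2]) := by
        have h3 := dvd_neg.mpr h1
        convert h3 using 1
        push_cast
        ring
      have h4 := int_dvd_of_padic h2
      exact_mod_cast h4
    obtain ⟨cc, hcc⟩ := hdvd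
    have hδ : sfun T z (i+1) = sfun T z i + (if (2:ℤ_[2]) ∣ T^[i] z then 0 else 2^i) := rfl
    have hnd : 2^i * (n / 2^i) + n % 2^i = n := Nat.div_add_mod n (2^i)
    have hmod : n % 2^(i+1) = n % 2^i + 2^i * (n / 2^i % 2) := Nat.mod_pow_succ
    rw [hδ] at hcc ⊢
    rw [hmod]
    by_cases he : (2:ℤ_[2]) ∣ T^[i] z
    · rw [if_pos he] at hcc ⊢
      have key : 2^i * (n / 2^i + 1) = 2^i * (2 * cc) := by
        have e1 : 2^i * (n / 2^i + 1) = 2^i * (n / 2^i) + 2^i := by ring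
        have e2 : 2^i * (2 * cc) = 2^(i+1) * cc := by ring
        linarith
      have hN : n / 2^i + 1 = 2 * cc := Nat.eq_of_mul_eq_mul_left hP key
      have hb : n / 2^i % 2 = 1 := by omega
      rw [hb, pow_succ]
      linarith
    · rw [if_neg he] at hcc ⊢
      have key : 2^i * (n / 2^i + 2) = 2^i * (2 * cc) := by
        have e1 : 2^i * (n / 2^i + 2) = 2^i * (n / 2^i) + 2^i + 2^i := by ring
        have e2 : 2^i * (2 * cc) = 2^(i+1) * cc := by ring
        linarith
      have hN : n / 2^i + 2 = 2 * cc := Nat.eq_of_mul_eq_mul_left hP key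
      have hb : n / 2^i % 2 = 0 := by omega
      rw [hb, pow_succ]
      linarith

lemma parity_iff (z : ℤ_[2]) (n : ℕ) (hz : Q z = -1 - (n : ℤ_[2])) (i : ℕ) :
    ((2:ℤ_[2]) ∣ T^[i] z) ↔ n / 2^i % 2 = 1 := by
  have h1 := sfun_add_mod hQ z n hz i
  have h2 := sfun_add_mod hQ z n hz (i+1)
  have hδ : sfun T z (i+1) = sfun T z i + (if (2:ℤ_[2]) ∣ T^[i] z then 0 else 2^i) := rfl
  have hmod : n % 2^(i+1) = n % 2^i + 2^i * (n / 2^i % 2) := Nat.mod_pow_succ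
  have hP : 0 < (2:ℕ)^i := Nat.two_pow_pos i
  have hb : n / 2^i % 2 = 0 ∨ n / 2^i % 2 = 1 := Nat.mod_two_eq_zero_or_one _
  rw [hδ, hmod, pow_succ] at h2
  by_cases he : (2:ℤ_[2]) ∣ T^[i] z
  · refine ⟨fun _ => ?_, fun _ => he⟩
    rw [if_pos he] at h2
    rcases hb with hb | hb
    · rw [hb] at h2
      exfalso
      simp only [Nat.mul_zero, Nat.add_zero] at h2
      linarith
    · exact hb
  · refine ⟨fun hd => absurd hd he, fun hb1 => ?_⟩
    exfalso
    rw [if_neg he] at h2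
    rw [hb1] at h2
    simp only [Nat.mul_one] at h2
    linarith

end Main

lemma sfun_mod (T : ℤ_[2] → ℤ_[2]) (y : ℤ_[2]) (i : ℕ) :
    ∀ k, i ≤ k → sfun T y k % 2^i = sfun T y i % 2^i := by
  intro k
  induction k with
  | zero => intro h; interval_cases i; rfl
  | succ k ih =>
    intro h
    rcases Nat.lt_or_ge i (k+1) with h1 | h1
    · have hik : i ≤ k := by omega
      have hδ : sfun T y (k+1) = sfun T y k + (if (2:ℤ_[2]) ∣ T^[k] y then 0 else 2^k) := rfl
      rw [hδ]
      obtain ⟨d, hd⟩ : (2:ℕ)^i ∣ 2^k := pow_dvd_pow 2 hik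
      split
      · simpa using ih hik
      · rw [hd, Nat.add_mul_mod_self_left]
        exact ih hik
    · have : i = k + 1 := by omega
      subst this
      rfl

lemma sfun_bit (T : ℤ_[2] → ℤ_[2]) (y : ℤ_[2]) (i k : ℕ) (hik : i < k) :
    sfun T y k / 2^i % 2 = (if (2:ℤ_[2]) ∣ T^[i] y then 0 else 1) := by
  have h1 : sfun T y k % 2^(i+1) = sfun T y (i+1) := by
    rw [sfun_mod T y (i+1) k hik, Nat.mod_eq_of_lt (sfun_lt T y (i+1))]
  have hmod : sfun T y k % 2^(i+1)
      = sfun T y k % 2^i + 2^i * (sfun T y k / 2^i % 2) := Nat.mod_pow_succ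
  have h2 : sfun T y k % 2^i = sfun T y i % 2^i := sfun_mod T y i k (by omega)
  have h3 : sfun T y i % 2^i = sfun T y i := Nat.mod_eq_of_lt (sfun_lt T y i)
  have hδ : sfun T y (i+1) = sfun T y i + (if (2:ℤ_[2]) ∣ T^[i] y then 0 else 2^i) := rfl
  have hP : 0 < (2:ℕ)^i := Nat.two_pow_pos i
  have hb : sfun T y k / 2^i % 2 = 0 ∨ sfun T y k / 2^i % 2 = 1 := Nat.mod_two_eq_zero_or_one _
  rw [h1, hδ] at hmod
  rw [h2, h3] at hmod
  -- hmod : sfun T y i + (if ... then 0 else 2^i) = sfun T y i + 2^i * bit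
  have hmod' : (if (2:ℤ_[2]) ∣ T^[i] y then 0 else 2^i) = 2^i * (sfun T y k / 2^i % 2) :=
    Nat.add_left_cancel hmod
  by_cases he : (2:ℤ_[2]) ∣ T^[i] y
  · rw [if_pos he] at hmod' ⊢
    rcases hb with hb | hb
    · exact hb
    · rw [hb] at hmod'; omega
  · rw [if_neg he] at hmod' ⊢
    rcases hb with hb | hb
    · rw [hb] at hmod'; omega
    · exact hb

lemma allodd (m r : ℤ) (hm : Odd m) {T : ℤ_[2] → ℤ_[2]}
    (hT : ∀ x, 2 * T x = if (2 : ℤ_[2]) ∣ x then x else (m : ℤ_[2]) * x + (r : ℤ_[2]))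
    {z : ℤ_[2]} (hodd : ∀ i, ¬ (2:ℤ_[2]) ∣ T^[i] z) :
    ((m:ℤ_[2]) - 2) * z + (r : ℤ_[2]) = 0 := by
  set v : ℕ → ℤ_[2] := fun i => ((m:ℤ_[2]) - 2) * T^[i] z + (r:ℤ_[2]) with hv
  have hstep : ∀ i, 2 * v (i+1) = (m:ℤ_[2]) * v i := by
    intro i
    have h := hT (T^[i] z)
    rw [if_neg (hodd i)] at h
    have hit : T^[i+1] z = T (T^[i] z) := Function.iterate_succ_apply' T i z
    simp only [hv, hit]
    linear_combination ((m:ℤ_[2]) - 2) * h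
  have hvi : ∀ i, v 0 * (m:ℤ_[2])^i = 2^i * v i := by
    intro i
    induction i with
    | zero => simp
    | succ i ih =>
      calc v 0 * (m:ℤ_[2])^(i+1) = (v 0 * (m:ℤ_[2])^i) * (m:ℤ_[2]) := by ring
        _ = 2^i * v i * (m:ℤ_[2]) := by rw [ih]
        _ = 2^i * ((m:ℤ_[2]) * v i) := by ring
        _ = 2^i * (2 * v (i+1)) := by rw [hstep i]
        _ = 2^(i+1) * v (i+1) := by ring
  have hmu : IsUnit ((m:ℤ_[2])) := by
    rw [PadicInt.isUnit_iff]
    have h1 : ‖(m:ℤ_[2])‖ ≤ 1 := PadicInt.norm_le_one _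
    have h2 : ¬ ‖(m:ℤ_[2])‖ < 1 := by
      rw [PadicInt.norm_int_lt_one_iff_dvd]
      intro hdvd
      obtain ⟨c, hc⟩ := hm
      obtain ⟨d, hd⟩ := hdvd
      omega
    rcases lt_or_eq_of_le h1 with h | h
    · exact absurd h h2
    · exact h
  have hdvd : ∀ i : ℕ, (2^i : ℤ_[2]) ∣ v 0 := by
    intro i
    have hd : (2^i : ℤ_[2]) ∣ v 0 * (m:ℤ_[2])^i := by
      rw [hvi i]; exact dvd_mul_right _ _
    exact ((hmu.pow i).dvd_mul_right).mp hd
  have h0 := eq_zero_of_forall_dvd hdvd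
  simpa [hv] using h0

noncomputable def Wq (m r : ℚ) (c : ℕ → Prop) : ℕ → ℕ → ℚ
  | 0, _ => -r / (m - 2)
  | k+1, j => if c j then (2 * Wq m r c k (j+1) - r) / m else 2 * Wq m r c k (j+1)

lemma Wq_diff (m r : ℚ) (hm : 3 ≤ m) (c : ℕ → Prop) :
    ∀ k j, |Wq m r c (k+1) j - Wq m r c k j| ≤
      (3 * |Wq m r c 0 0| + |r|) * ∏ t ∈ Finset.range k, (if c (j+t) then 2/m else 2) := by
  have hm0 : (0:ℚ) < m := by linarith
  intro k
  induction k with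
  | zero =>
    intro j
    simp only [Finset.range_zero, Finset.prod_empty, mul_one]
    have h0 : Wq m r c 0 j = -r/(m-2) := rfl
    have h00 : Wq m r c 0 0 = -r/(m-2) := rfl
    have h1 : Wq m r c 1 j = if c j then (2 * (-r/(m-2)) - r)/m else 2 * (-r/(m-2)) := rfl
    rw [h0, h00, h1]
    set c0 : ℚ := -r/(m-2) with hc0
    by_cases hc : c j
    · rw [if_pos hc]
      have e1 : |(2*c0 - r)/m| ≤ |2*c0 - r| := by
        rw [abs_div, abs_of_pos hm0]
        exact div_le_self (abs_nonneg _) (by linarith)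
      have e2 : |2*c0 - r| ≤ 2*|c0| + |r| := by
        calc |2*c0 - r| ≤ |2*c0| + |r| := abs_sub _ _
          _ = 2*|c0| + |r| := by rw [abs_mul]; norm_num
      calc |(2*c0 - r)/m - c0| ≤ |(2*c0 - r)/m| + |c0| := abs_sub _ _
        _ ≤ (2*|c0| + |r|) + |c0| := by linarith
        _ = 3*|c0| + |r| := by ring
    · rw [if_neg hc]
      have : |2*c0 - c0| = |c0| := by rw [show 2*c0 - c0 = c0 by ring]
      rw [this]
      have := abs_nonneg c0
      have := abs_nonneg r
      linarith
  | succ k ih =>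
    intro j
    have hprod : ∏ t ∈ Finset.range (k+1), (if c (j+t) then 2/m else 2)
        = (if c j then 2/m else 2) * ∏ t ∈ Finset.range k, (if c (j+1+t) then 2/m else 2) := by
      rw [Finset.prod_range_succ']
      rw [mul_comm, Nat.add_zero]
      congr 1
      apply Finset.prod_congr rfl
      intro t _
      have : j + (t+1) = j+1+t := by omega
      rw [this]
    have hk2 : Wq m r c (k+2) j
        = if c j then (2 * Wq m r c (k+1) (j+1) - r)/m else 2 * Wq m r c (k+1) (j+1) := rfl
    have hk1 : Wq m r c (k+1) j
        = if c j then (2 * Wq m r c k (j+1) - r)/m else 2 * Wq m r c k (j+1) := rfl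
    rw [hk2, hk1, hprod]
    have ihj := ih (j+1)
    have hC : (0:ℚ) ≤ 3 * |Wq m r c 0 0| + |r| := by positivity
    have hPpos : (0:ℚ) ≤ ∏ t ∈ Finset.range k, (if c (j+1+t) then 2/m else 2) := by
      apply Finset.prod_nonneg
      intro t _
      split <;> positivity
    by_cases hc : c j
    · rw [if_pos hc, if_pos hc, if_pos hc]
      have e : (2 * Wq m r c (k+1) (j+1) - r)/m - (2 * Wq m r c k (j+1) - r)/m
          = (2/m) * (Wq m r c (k+1) (j+1) - Wq m r c k (j+1)) := by
        field_simp
        ring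
      rw [e, abs_mul, abs_of_pos (by positivity : (0:ℚ) < 2/m)]
      calc (2/m) * |Wq m r c (k+1) (j+1) - Wq m r c k (j+1)|
          ≤ (2/m) * ((3 * |Wq m r c 0 0| + |r|) *
            ∏ t ∈ Finset.range k, (if c (j+1+t) then 2/m else 2)) := by
            apply mul_le_mul_of_nonneg_left ihj (by positivity)
        _ = (3 * |Wq m r c 0 0| + |r|) *
            ((2/m) * ∏ t ∈ Finset.range k, (if c (j+1+t) then 2/m else 2)) := by ring
    · rw [if_neg hc, if_neg hc, if_neg hc]
      have e : 2 * Wq m r c (k+1) (j+1) - 2 * Wq m r c k (j+1)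
          = 2 * (Wq m r c (k+1) (j+1) - Wq m r c k (j+1)) := by ring
      rw [e, abs_mul]
      have : |(2:ℚ)| = 2 := by norm_num
      rw [this]
      calc 2 * |Wq m r c (k+1) (j+1) - Wq m r c k (j+1)|
          ≤ 2 * ((3 * |Wq m r c 0 0| + |r|) *
            ∏ t ∈ Finset.range k, (if c (j+1+t) then 2/m else 2)) := by
            apply mul_le_mul_of_nonneg_left ihj (by norm_num)
        _ = (3 * |Wq m r c 0 0| + |r|) *
            (2 * ∏ t ∈ Finset.range k, (if c (j+1+t) then 2/m else 2)) := by ring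

lemma prod_ite_eq_card (m : ℚ) (hm : 0 < m) (c : ℕ → Prop) (k : ℕ) :
    ∏ t ∈ Finset.range k, (if c t then 2/m else 2)
      = 2^k * (1/m)^(((Finset.range k).filter (fun t => c t)).card) := by
  induction k with
  | zero => simp
  | succ k ih =>
    rw [Finset.prod_range_succ, ih, Finset.range_add_one, Finset.filter_insert]
    by_cases hc : c k
    · rw [if_pos hc, if_pos hc, Finset.card_insert_of_notMem (by simp)]
      rw [pow_succ, pow_succ]
      field_simp
    · rw [if_neg hc, if_neg hc, pow_succ]
      ring

end Stmt18

/-- for odd `m ≥ 3` and odd `r`, if the lower density `ν_{m,r}(x)` of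
even iterates of `T_{m,r}` at `x` exceeds `log 2 / log m`, then the sequence of
rationals `Ω_{k,m,r}(x) = Φ_{m,r}(-1 - Q_{k,m,r}(x))` converges in the real metric. -/
theorem stmt18 (m r : ℤ) (hm : Odd m) (hm3 : 3 ≤ m) (hr : Odd r)
    (T Q Φ : ℤ_[2] → ℤ_[2])
    (hT : ∀ x, 2 * T x = if (2 : ℤ_[2]) ∣ x then x else (m : ℤ_[2]) * x + (r : ℤ_[2]))
    (hQ : ∀ x (k : ℕ), (2 ^ k : ℤ_[2]) ∣
      (Q x - ∑ i ∈ Finset.range k, (if (2 : ℤ_[2]) ∣ T^[i] x then 0 else 1) * 2 ^ i))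
    (hΦl : Function.LeftInverse Φ Q) (hΦr : Function.RightInverse Φ Q)
    (Qk : ℕ → ℤ_[2] → ℕ)
    (hQk : ∀ (k : ℕ) (x : ℤ_[2]), Qk k x < 2 ^ k ∧
      (2 ^ k : ℤ_[2]) ∣ (Q x - (Qk k x : ℤ_[2])))
    (x : ℤ_[2])
    -- `w k` is the value `Ω_{k,m,r}(x)` regarded as a rational number
    (w : ℕ → ℚ)
    (hw : ∀ k : ℕ, ((w k : ℚ_[2])) = ((Φ (-1 - (Qk k x : ℤ_[2])) : ℤ_[2]) : ℚ_[2]))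
    (hν : Real.log 2 / Real.log m <
      Filter.liminf (fun k : ℕ =>
        (((Finset.range k).filter (fun i => (2 : ℤ_[2]) ∣ T^[i] x)).card : ℝ) / k)
        Filter.atTop) :
    ∃ L : ℝ, Filter.Tendsto (fun k : ℕ => (w k : ℝ)) Filter.atTop (nhds L) := by
  -- the points `Z k y = Φ (-1 - Qk k y)`
  set Z : ℕ → ℤ_[2] → ℤ_[2] := fun k y => Φ (-1 - (Qk k y : ℤ_[2])) with hZ
  have hQZ : ∀ k y, Q (Z k y) = -1 - (Qk k y : ℤ_[2]) := fun k y => hΦr _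
  -- `Qk k y` coincides with the bit sum `sfun T y k`
  have hQkeq : ∀ k y, Qk k y = Stmt18.sfun T y k := by
    intro k y
    have h1 := (hQk k y).2
    have h2 := Stmt18.dvd_sub_sfun hQ y k
    have h3 : (2^k : ℤ_[2]) ∣ ((((Qk k y : ℤ) - (Stmt18.sfun T y k : ℤ)) : ℤ) : ℤ_[2]) := by
      have h4 := dvd_sub h2 h1
      convert h4 using 1
      push_cast
      ring
    have h4 : ((2:ℤ))^k ∣ ((Qk k y : ℤ) - (Stmt18.sfun T y k : ℤ)) := Stmt18.int_dvd_of_padic h3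
    have h5 : |(Qk k y : ℤ) - (Stmt18.sfun T y k : ℤ)| < 2^k := by
      have e1 : (Qk k y : ℤ) < 2^k := by exact_mod_cast (hQk k y).1
      have e2 : (Stmt18.sfun T y k : ℤ) < 2^k := by exact_mod_cast Stmt18.sfun_lt T y k
      have e3 : (0:ℤ) ≤ (Qk k y : ℤ) := Int.natCast_nonneg _
      have e4 : (0:ℤ) ≤ (Stmt18.sfun T y k : ℤ) := Int.natCast_nonneg _
      rw [abs_lt]
      constructor <;> linarith
    have h6 := Int.eq_zero_of_abs_lt_dvd h4 h5
    have h7 : (Qk k y : ℤ) = (Stmt18.sfun T y k : ℤ) := by linarith [sub_eq_zero.mp h6]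
    exact_mod_cast h7
  -- parity structure of the orbit of `Z k y`
  have hparZ : ∀ k y i, ((2:ℤ_[2]) ∣ T^[i] (Z k y) ↔ (i < k ∧ ¬ (2:ℤ_[2]) ∣ T^[i] y)) := by
    intro k y i
    have hp := Stmt18.parity_iff hQ (Z k y) (Qk k y) (hQZ k y) i
    rcases Nat.lt_or_ge i k with hik | hik
    · rw [hp, hQkeq k y, Stmt18.sfun_bit T y i k hik]
      by_cases he : (2:ℤ_[2]) ∣ T^[i] y
      · rw [if_pos he]
        simp [he]
      · rw [if_neg he]
        simp [he, hik]
    · rw [hp]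
      have hd0 : Qk k y / 2^i = 0 := by
        apply Nat.div_eq_of_lt
        exact lt_of_lt_of_le (hQk k y).1 (Nat.pow_le_pow_right (by norm_num) hik)
      rw [hd0]
      simp only [Nat.zero_mod]
      constructor
      · intro h; exact absurd h (by norm_num)
      · intro ⟨h1, _⟩; omega
  -- the backwards recursion
  have hTZ : ∀ k y, T (Z (k+1) y) = Z k (T y) := by
    intro k y
    have hpar : ∀ i, ((2:ℤ_[2]) ∣ T^[i] (T (Z (k+1) y)) ↔ (2:ℤ_[2]) ∣ T^[i] (Z k (T y))) := by
      intro i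
      rw [← Function.iterate_succ_apply, hparZ (k+1) y (i+1), hparZ k (T y) i,
        ← Function.iterate_succ_apply]
      constructor
      · intro ⟨h1, h2⟩; exact ⟨by omega, h2⟩
      · intro ⟨h1, h2⟩; exact ⟨by omega, h2⟩
    have hq := Stmt18.Q_ext hQ hpar
    calc T (Z (k+1) y) = Φ (Q (T (Z (k+1) y))) := (hΦl _).symm
      _ = Φ (Q (Z k (T y))) := by rw [hq]
      _ = Z k (T y) := hΦl _
  have hpar0 : ∀ k y, ((2:ℤ_[2]) ∣ Z (k+1) y ↔ ¬ (2:ℤ_[2]) ∣ y) := by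
    intro k y
    have := hparZ (k+1) y 0
    simp only [Function.iterate_zero_apply] at this
    rw [this]
    constructor
    · intro ⟨_, h⟩; exact h
    · intro h; exact ⟨by omega, h⟩
  have hstep_even : ∀ k y, (2:ℤ_[2]) ∣ y →
      2 * Z k (T y) = (m:ℤ_[2]) * Z (k+1) y + (r:ℤ_[2]) := by
    intro k y hy
    have hodd : ¬ (2:ℤ_[2]) ∣ Z (k+1) y := fun hd => ((hpar0 k y).mp hd) hy
    have h := hT (Z (k+1) y)
    rw [if_neg hodd] at h
    rw [← hTZ k y, h]
  have hstep_odd : ∀ k y, ¬ (2:ℤ_[2]) ∣ y → 2 * Z k (T y) = Z (k+1) y := by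
    intro k y hy
    have heven : (2:ℤ_[2]) ∣ Z (k+1) y := (hpar0 k y).mpr hy
    have h := hT (Z (k+1) y)
    rw [if_pos heven] at h
    rw [← hTZ k y, h]
  have hz0 : ∀ y, ((m:ℤ_[2]) - 2) * Z 0 y + (r:ℤ_[2]) = 0 := by
    intro y
    apply Stmt18.allodd m r hm hT
    intro i hd
    have := (hparZ 0 y i).mp hd
    omega
  -- nonvanishing of casts in `ℚ_[2]`
  have hm2Q : ((m:ℚ_[2]) - 2) ≠ 0 := by
    intro h
    have h1 : ((m - 2 : ℤ) : ℚ_[2]) = 0 := by push_cast; linear_combination h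
    have h2 : (m - 2 : ℤ) = 0 := by exact_mod_cast h1
    omega
  have hmQ : ((m:ℚ_[2])) ≠ 0 := by
    intro h
    have h1 : ((m : ℤ) : ℚ_[2]) = 0 := by exact_mod_cast h
    have h2 : (m : ℤ) = 0 := by exact_mod_cast h1
    omega
  have hm2q : ((m:ℚ) - 2) ≠ 0 := by
    intro h
    have : (m:ℚ) = 2 := by linarith
    have : (m:ℤ) = 2 := by exact_mod_cast this
    omega
  -- the rational values
  set c : ℕ → Prop := fun j => (2:ℤ_[2]) ∣ T^[j] x with hc
  have claimE : ∀ k j, ((Stmt18.Wq (m:ℚ) (r:ℚ) c k j : ℚ) : ℚ_[2])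
      = ((Z k (T^[j] x) : ℤ_[2]) : ℚ_[2]) := by
    intro k
    induction k with
    | zero =>
      intro j
      have h0 := hz0 (T^[j] x)
      have h1 : ((m:ℚ_[2]) - 2) * ((Z 0 (T^[j] x) : ℤ_[2]) : ℚ_[2]) + (r:ℚ_[2]) = 0 := by
        have := congrArg (fun t : ℤ_[2] => (t : ℚ_[2])) h0
        push_cast at this
        rw [show ((2:ℤ_[2]):ℚ_[2]) = 2 from by norm_cast] at this
        convert this using 2 <;> push_cast <;> ring
      have h2 : Stmt18.Wq (m:ℚ) (r:ℚ) c 0 j = -(r:ℚ)/((m:ℚ)-2) := rfl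
      rw [h2]
      push_cast
      rw [div_eq_iff hm2Q]
      linear_combination -h1
    | succ k ih =>
      intro j
      have hiter : T^[j+1] x = T (T^[j] x) := Function.iterate_succ_apply' T j x
      by_cases hcj : c j
      · have hE := hstep_even k (T^[j] x) hcj
        rw [← hiter] at hE
        have hW : Stmt18.Wq (m:ℚ) (r:ℚ) c (k+1) j
            = (2 * Stmt18.Wq (m:ℚ) (r:ℚ) c k (j+1) - (r:ℚ))/(m:ℚ) := by
          show (if c j then _ else _) = _
          rw [if_pos hcj]
        rw [hW]
        push_cast
        rw [div_eq_iff hmQ]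
        have hcast := congrArg (fun t : ℤ_[2] => (t : ℚ_[2])) hE
        push_cast at hcast
        rw [show ((2:ℤ_[2]):ℚ_[2]) = 2 from by norm_cast] at hcast
        linear_combination 2 * (ih (j+1)) + hcast
      · have hO := hstep_odd k (T^[j] x) hcj
        rw [← hiter] at hO
        have hW : Stmt18.Wq (m:ℚ) (r:ℚ) c (k+1) j
            = 2 * Stmt18.Wq (m:ℚ) (r:ℚ) c k (j+1) := by
          show (if c j then _ else _) = _
          rw [if_neg hcj]
        rw [hW]
        push_cast
        have hcast := congrArg (fun t : ℤ_[2] => (t : ℚ_[2])) hO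
        push_cast at hcast
        rw [show ((2:ℤ_[2]):ℚ_[2]) = 2 from by norm_cast] at hcast
        linear_combination 2 * (ih (j+1)) + hcast
  have hwk : ∀ k, w k = Stmt18.Wq (m:ℚ) (r:ℚ) c k 0 := by
    intro k
    have h1 : ((w k : ℚ) : ℚ_[2]) = ((Stmt18.Wq (m:ℚ) (r:ℚ) c k 0 : ℚ) : ℚ_[2]) := by
      rw [hw k, claimE k 0]
      simp [hZ]
    exact_mod_cast h1
  -- real analysis
  set u : ℕ → ℝ := fun k =>
    (((Finset.range k).filter (fun i => (2 : ℤ_[2]) ∣ T^[i] x)).card : ℝ) / k with hu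
  set e : ℕ → ℕ := fun k => ((Finset.range k).filter (fun i => (2 : ℤ_[2]) ∣ T^[i] x)).card
    with he
  have hM1 : (1:ℝ) < (m:ℝ) := by
    have : (3:ℝ) ≤ (m:ℝ) := by exact_mod_cast hm3
    linarith
  have hM0 : (0:ℝ) < (m:ℝ) := by linarith
  have hlogm : 0 < Real.log (m:ℝ) := Real.log_pos hM1
  have hlog2 : 0 < Real.log 2 := Real.log_pos (by norm_num)
  set ℓ : ℝ := Filter.liminf u Filter.atTop with hℓ
  set t : ℝ := (Real.log 2 / Real.log (m:ℝ) + ℓ) / 2 with ht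
  have hν' : Real.log 2 / Real.log (m:ℝ) < ℓ := hν
  have ht1 : Real.log 2 / Real.log (m:ℝ) < t := by rw [ht]; linarith
  have ht2 : t < ℓ := by rw [ht]; linarith
  have hbd : Filter.IsBoundedUnder (· ≥ ·) Filter.atTop u := by
    refine ⟨0, ?_⟩
    rw [Filter.eventually_map]
    apply Filter.Eventually.of_forall
    intro k
    have : (0:ℝ) ≤ u k := by
      rw [hu]
      positivity
    exact this
  have hev : ∀ᶠ k in Filter.atTop, t < u k := Filter.eventually_lt_of_lt_liminf ht2 hbd
  obtain ⟨N, hN⟩ := Filter.eventually_atTop.mp hev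
  set q : ℝ := 2 * (1/(m:ℝ)) ^ t with hq
  have hiM0 : (0:ℝ) < 1/(m:ℝ) := by positivity
  have hiM1 : (1:ℝ)/(m:ℝ) ≤ 1 := by
    rw [div_le_one hM0]; linarith
  have hq0 : 0 ≤ q := by positivity
  have hq1 : q < 1 := by
    have h1 : (1/(m:ℝ)) ^ t = Real.exp (Real.log (1/(m:ℝ)) * t) :=
      Real.rpow_def_of_pos hiM0 t
    have hlog1m : Real.log (1/(m:ℝ)) = - Real.log (m:ℝ) := by
      rw [one_div, Real.log_inv]
    have h2 : Real.log (1/(m:ℝ)) * t < - Real.log 2 := by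
      rw [hlog1m]
      have h3 : Real.log 2 < t * Real.log (m:ℝ) := by
        rw [div_lt_iff₀ hlogm] at ht1
        linarith
      nlinarith
    calc q = 2 * Real.exp (Real.log (1/(m:ℝ)) * t) := by rw [hq, h1]
      _ < 2 * Real.exp (- Real.log 2) := by
          have := Real.exp_lt_exp.mpr h2
          linarith
      _ = 2 * (1/2) := by
          rw [Real.exp_neg, Real.exp_log (by norm_num : (0:ℝ) < 2)]
          norm_num
      _ = 1 := by norm_num
  -- the difference bound
  set Cq : ℚ := 3 * |Stmt18.Wq (m:ℚ) (r:ℚ) c 0 0| + |(r:ℚ)| with hCq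
  have hCq0 : (0:ℚ) ≤ Cq := by rw [hCq]; positivity
  have hreal : ∀ k, dist ((w k : ℝ)) ((w (k+1) : ℝ))
      ≤ (Cq:ℝ) * ((2:ℝ)^k * (1/(m:ℝ))^(e k)) := by
    intro k
    have h1 := Stmt18.Wq_diff (m:ℚ) (r:ℚ) (by exact_mod_cast hm3) c k 0
    have h2 : ∀ tt, (0:ℕ) + tt = tt := fun tt => Nat.zero_add tt
    have h3 : (∏ s ∈ Finset.range k, (if c (0 + s) then 2/(m:ℚ) else 2))
        = ∏ s ∈ Finset.range k, (if c s then 2/(m:ℚ) else 2) := by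
      apply Finset.prod_congr rfl
      intro s _
      rw [Nat.zero_add]
    rw [h3] at h1
    have h4 := Stmt18.prod_ite_eq_card (m:ℚ) (by exact_mod_cast (by linarith : (0:ℤ) < m)) c k
    rw [h4] at h1
    have h5 : |w (k+1) - w k| ≤ Cq * (2^k * (1/(m:ℚ))^(e k)) := by
      rw [hwk k, hwk (k+1)]
      exact h1
    have h6 : dist ((w k : ℝ)) ((w (k+1) : ℝ)) = ((|w (k+1) - w k| : ℚ) : ℝ) := by
      rw [Real.dist_eq, ← abs_sub_comm]
      push_cast
      rfl
    rw [h6]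
    have h7 : ((Cq * (2^k * (1/(m:ℚ))^(e k)) : ℚ) : ℝ)
        = (Cq:ℝ) * ((2:ℝ)^k * (1/(m:ℝ))^(e k)) := by
      push_cast
      ring
    rw [← h7]
    exact_mod_cast h5
  set N' : ℕ := max N 1 with hN'
  have hgeom : ∀ k, N' ≤ k → (2:ℝ)^k * (1/(m:ℝ))^(e k) ≤ q^k := by
    intro k hk
    have hk0 : 0 < k := lt_of_lt_of_le (by norm_num) (le_trans (le_max_right N 1) hk)
    have hkR : (0:ℝ) < (k:ℝ) := by exact_mod_cast hk0
    have htk : t * (k:ℝ) ≤ ((e k : ℕ) : ℝ) := by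
      have h8 := hN k (le_trans (le_max_left N 1) hk)
      have h9 : t < ((e k : ℕ):ℝ) / (k:ℝ) := h8
      rw [lt_div_iff₀ hkR] at h9
      linarith
    have h10 : (1/(m:ℝ))^(e k) ≤ (1/(m:ℝ)) ^ (t * (k:ℝ)) := by
      rw [← Real.rpow_natCast (1/(m:ℝ)) (e k)]
      exact Real.rpow_le_rpow_of_exponent_ge hiM0 hiM1 htk
    calc (2:ℝ)^k * (1/(m:ℝ))^(e k) ≤ (2:ℝ)^k * (1/(m:ℝ))^(t * (k:ℝ)) := by
          apply mul_le_mul_of_nonneg_left h10 (by positivity)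
      _ = (2:ℝ)^k * ((1/(m:ℝ))^t)^k := by
          rw [Real.rpow_mul (le_of_lt hiM0) t (k:ℝ), Real.rpow_natCast]
      _ = q^k := by rw [hq, mul_pow]
  have hsum : Summable (fun k : ℕ => dist ((w k : ℝ)) ((w (k+1) : ℝ))) := by
    rw [← summable_nat_add_iff N']
    refine Summable.of_nonneg_of_le (fun k => dist_nonneg) (fun k => ?_)
      ((summable_geometric_of_lt_one hq0 hq1).mul_left ((Cq:ℝ) * q^N'))
    calc dist ((w (k + N') : ℝ)) ((w (k + N' + 1) : ℝ))
        ≤ (Cq:ℝ) * ((2:ℝ)^(k + N') * (1/(m:ℝ))^(e (k + N'))) := hreal (k + N')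
        _ ≤ (Cq:ℝ) * q^(k + N') := by
            apply mul_le_mul_of_nonneg_left (hgeom (k + N') (by omega)) (by exact_mod_cast hCq0)
        _ = ((Cq:ℝ) * q^N') * q^k := by rw [pow_add]; ring
  have hcauchy : CauchySeq (fun k : ℕ => (w k : ℝ)) := cauchySeq_of_summable_dist hsum
  exact cauchySeq_tendsto_of_complete hcauchy
end

section
/- If liminf_{j→∞} j/i_j > log 2 / log m for an increasing sequence of naturals i_0 < i_1 < ..., with m ≥ 3, then the series Σ_j 2^{i_j} / m^{j+1} converges in ℝ, and 2^{i_j}/m^j → 0 as j → ∞. -/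
/-- if `liminf_j j/i_j > log 2 / log m` for a strictly increasing
sequence of naturals `(i_j)` and `m ≥ 3`, then `Σ_j 2^{i_j}/m^{j+1}` converges in
`ℝ` and `2^{i_j}/m^j → 0`. -/
theorem stmt19 (m : ℝ) (hm : 3 ≤ m) (i : ℕ → ℕ) (hi : StrictMono i)
    (h : Real.log 2 / Real.log m <
      Filter.liminf (fun j : ℕ => (j : ℝ) / (i j : ℝ)) Filter.atTop) :
    Summable (fun j : ℕ => (2 : ℝ) ^ (i j) / m ^ (j + 1)) ∧
      Filter.Tendsto (fun j : ℕ => (2 : ℝ) ^ (i j) / m ^ j) Filter.atTop (nhds 0) := by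
  have hm0 : (0:ℝ) < m := by linarith
  have hm1 : (1:ℝ) < m := by linarith
  have hlogm : 0 < Real.log m := Real.log_pos hm1
  have hlog2 : 0 < Real.log 2 := Real.log_pos (by norm_num)
  obtain ⟨c, hc1, hc2⟩ := exists_between h
  have hc0 : 0 < c := lt_trans (div_pos hlog2 hlogm) hc1
  have hbd : Filter.IsBoundedUnder (· ≥ ·) Filter.atTop
      (fun j : ℕ => (j : ℝ) / (i j : ℝ)) :=
    Filter.isBoundedUnder_of ⟨0, fun j => by positivity⟩
  have hev : ∀ᶠ j : ℕ in Filter.atTop, c < (j : ℝ) / (i j : ℝ) :=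
    Filter.eventually_lt_of_lt_liminf hc2 hbd
  set r : ℝ := (2 : ℝ) ^ (1/c) / m with hr
  have h2c : (0:ℝ) < (2:ℝ) ^ (1/c) := Real.rpow_pos_of_pos two_pos _
  have hr0 : 0 ≤ r := le_of_lt (div_pos h2c hm0)
  have hr1 : r < 1 := by
    rw [hr, div_lt_one hm0]
    have hlt : (1/c) * Real.log 2 < Real.log m := by
      rw [div_lt_iff₀ hlogm] at hc1
      rw [one_div, inv_mul_eq_div, div_lt_iff₀ hc0]
      linarith [hc1]
    calc (2:ℝ) ^ (1/c) = Real.exp ((1/c) * Real.log 2) := by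
          rw [Real.rpow_def_of_pos two_pos, mul_comm]
      _ < Real.exp (Real.log m) := Real.exp_lt_exp.2 hlt
      _ = m := Real.exp_log hm0
  -- key eventual bound
  have key : ∀ᶠ j in Filter.atTop, (2 : ℝ) ^ (i j) / m ^ j ≤ r ^ j := by
    filter_upwards [hev] with j hj
    have hij : (0:ℝ) < (i j : ℝ) := by
      by_contra hle
      push_neg at hle
      have : (i j : ℝ) = 0 := le_antisymm hle (Nat.cast_nonneg _)
      rw [this, div_zero] at hj
      exact absurd hj (not_lt.2 hc0.le)
    have hiltc : (i j : ℝ) ≤ (j : ℝ) * (1/c) := by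
      rw [lt_div_iff₀ hij] at hj
      rw [mul_one_div, le_div_iff₀ hc0]
      nlinarith
    have h2 : (2:ℝ) ^ (i j) ≤ ((2:ℝ) ^ (1/c)) ^ j := by
      have : (2:ℝ) ^ ((i j : ℝ)) ≤ (2:ℝ) ^ ((j : ℝ) * (1/c)) :=
        Real.rpow_le_rpow_left_iff one_lt_two |>.2 hiltc
      calc (2:ℝ) ^ (i j) = (2:ℝ) ^ ((i j : ℝ)) := (Real.rpow_natCast 2 (i j)).symm
        _ ≤ (2:ℝ) ^ ((j : ℝ) * (1/c)) := this
        _ = ((2:ℝ) ^ (1/c)) ^ ((j:ℝ)) := by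
            rw [mul_comm, Real.rpow_mul (by norm_num : (0:ℝ) ≤ 2)]
        _ = ((2:ℝ) ^ (1/c)) ^ j := Real.rpow_natCast _ j
    rw [hr, div_pow]
    exact div_le_div_of_nonneg_right h2 (pow_pos hm0 j).le |>.trans_eq rfl
  have hgeo : Summable fun j : ℕ => r ^ j := summable_geometric_of_lt_one hr0 hr1
  constructor
  · apply summable_of_isBigO_nat hgeo
    apply Asymptotics.IsBigO.of_bound 1
    filter_upwards [key] with j hj
    have hf0 : (0:ℝ) ≤ (2 : ℝ) ^ (i j) / m ^ (j + 1) := by positivity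
    rw [Real.norm_eq_abs, Real.norm_eq_abs, abs_of_nonneg hf0,
      abs_of_nonneg (pow_nonneg hr0 j), one_mul]
    calc (2 : ℝ) ^ (i j) / m ^ (j + 1) ≤ (2 : ℝ) ^ (i j) / m ^ j := by
          apply div_le_div_of_nonneg_left (by positivity) (pow_pos hm0 j)
          exact pow_le_pow_right₀ hm1.le (Nat.le_succ j)
      _ ≤ r ^ j := hj
  · apply squeeze_zero' (Filter.Eventually.of_forall fun j => by positivity) key
    exact tendsto_pow_atTop_nhds_zero_of_lt_one hr0 hr1
end
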